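/- arXiv:2009.04856 — 15 statements merged into one kernel-verified Lean document; each statement's English description precedes it below -/
import Mathlib

section
/- Fix x > 0 and let c = F(x) satisfy 0 < c < 1 and f(x) > 0, where F is the cumulative distribution function and f the probability density function of a non-negative absolutely continuous random variable. Then the map α ↦ L̆_α(x) is strictly decreasing on ℝ; equivalently, the function h_c(α) = α c^α/(1 − c^α) for α ≠ 0, extended by continuity with h_c(0) = −1/log c, is strictly decreasing on ℝ. -/
/-- The α-generalized reversed aging intensity function of a distribution with
cdf `F` and density `f`:  `L̆_α(x) = α x F(x)^(α-1) f(x) / (1 - F(x)^α)` for `α ≠ 0`,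
and `L̆_0(x) = -x f(x) / (F(x) log F(x))`. -/
noncomputable def genRAI (F f : ℝ → ℝ) (α x : ℝ) : ℝ :=
  if α = 0 then -(x * f x) / (F x * Real.log (F x))
  else α * x * F x ^ (α - 1) * f x / (1 - F x ^ α)

noncomputable def phiAux (t : ℝ) : ℝ := t / (Real.exp t - 1)

lemma exp_sub_one_ne_zero {t : ℝ} (ht : t ≠ 0) : Real.exp t - 1 ≠ 0 := by
  intro h
  apply ht
  have : Real.exp t = Real.exp 0 := by rw [Real.exp_zero]; linarith
  exact Real.exp_injective this

lemma hasDerivAt_phiAux {t : ℝ} (ht : t ≠ 0) :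
    HasDerivAt phiAux ((1 * (Real.exp t - 1) - t * Real.exp t) / (Real.exp t - 1)^2) t := by
  have h1 : HasDerivAt (fun s : ℝ => s) 1 t := hasDerivAt_id t
  have h2 : HasDerivAt (fun s : ℝ => Real.exp s - 1) (Real.exp t) t :=
    (Real.hasDerivAt_exp t).sub_const 1
  exact h1.div h2 (exp_sub_one_ne_zero ht)

lemma phiAux_deriv_neg {t : ℝ} (ht : t ≠ 0) :
    (1 * (Real.exp t - 1) - t * Real.exp t) / (Real.exp t - 1)^2 < 0 := by
  apply div_neg_of_neg_of_pos
  · have h := Real.add_one_lt_exp (neg_ne_zero.mpr ht)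
    rw [Real.exp_neg, inv_eq_one_div] at h
    have h' := (lt_div_iff₀ (Real.exp_pos t)).mp h
    nlinarith
  · exact pow_two_pos_of_ne_zero (exp_sub_one_ne_zero ht)

lemma continuousOn_phiAux {s : Set ℝ} (hs : ∀ t ∈ s, t ≠ 0) : ContinuousOn phiAux s := by
  unfold phiAux
  exact ContinuousOn.div continuousOn_id
    ((Real.continuous_exp.continuousOn).sub continuousOn_const)
    (fun t ht => exp_sub_one_ne_zero (hs t ht))

lemma strictAntiOn_phiAux_pos : StrictAntiOn phiAux (Set.Ioi 0) := by
  apply strictAntiOn_of_deriv_neg (convex_Ioi 0)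
    (continuousOn_phiAux fun t ht => ne_of_gt ht)
  intro t ht
  rw [interior_Ioi] at ht
  rw [(hasDerivAt_phiAux (ne_of_gt ht)).deriv]
  exact phiAux_deriv_neg (ne_of_gt ht)

lemma strictAntiOn_phiAux_neg : StrictAntiOn phiAux (Set.Iio 0) := by
  apply strictAntiOn_of_deriv_neg (convex_Iio 0)
    (continuousOn_phiAux fun t ht => ne_of_lt ht)
  intro t ht
  rw [interior_Iio] at ht
  rw [(hasDerivAt_phiAux (ne_of_lt ht)).deriv]
  exact phiAux_deriv_neg (ne_of_lt ht)

lemma phiAux_lt_one {t : ℝ} (ht : 0 < t) : phiAux t < 1 := by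
  have h := Real.add_one_lt_exp (ne_of_gt ht)
  have hd : 0 < Real.exp t - 1 := by linarith
  unfold phiAux
  rw [div_lt_one hd]
  linarith

lemma one_lt_phiAux {t : ℝ} (ht : t < 0) : 1 < phiAux t := by
  have h := Real.add_one_lt_exp (ne_of_lt ht)
  have hd : Real.exp t - 1 < 0 := by
    have := Real.exp_lt_one_iff.mpr ht
    linarith
  unfold phiAux
  rw [one_lt_div_of_neg hd]
  linarith

noncomputable def phi0 (t : ℝ) : ℝ := if t = 0 then 1 else phiAux t

lemma strictAnti_phi0 : StrictAnti phi0 := by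
  intro a b hab
  unfold phi0
  rcases lt_trichotomy a 0 with ha | ha | ha
  · rw [if_neg (ne_of_lt ha)]
    rcases lt_trichotomy b 0 with hb | hb | hb
    · rw [if_neg (ne_of_lt hb)]
      exact strictAntiOn_phiAux_neg ha hb hab
    · rw [if_pos hb]
      exact one_lt_phiAux ha
    · rw [if_neg (ne_of_gt hb)]
      exact lt_trans (phiAux_lt_one hb) (one_lt_phiAux ha)
  · subst ha
    rw [if_pos rfl, if_neg (ne_of_gt hab)]
    exact phiAux_lt_one hab
  · rw [if_neg (ne_of_gt ha), if_neg (ne_of_gt (lt_trans ha hab))]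
    exact strictAntiOn_phiAux_pos ha (lt_trans ha hab) hab

/-- The h_c function equals a positive constant times `phi0 (-(log c) * α)`. -/
lemma h_eq (c : ℝ) (hc0 : 0 < c) (hc1 : c < 1) (α : ℝ) :
    (if α = 0 then -1 / Real.log c else α * c ^ α / (1 - c ^ α)) =
      (-1 / Real.log c) * phi0 (-(Real.log c) * α) := by
  have hL : Real.log c < 0 := Real.log_neg hc0 hc1
  have hLne : Real.log c ≠ 0 := ne_of_lt hL
  by_cases hα : α = 0
  · subst hα
    simp [phi0]
  · have hne : (-(Real.log c) * α) ≠ 0 := mul_ne_zero (neg_ne_zero.mpr hLne) hα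
    rw [if_neg hα]
    unfold phi0 phiAux
    rw [if_neg hne]
    have hc : c ^ α = Real.exp (Real.log c * α) := by
      rw [Real.rpow_def_of_pos hc0]
    rw [hc]
    have he : Real.exp (-(Real.log c) * α) = (Real.exp (Real.log c * α))⁻¹ := by
      rw [← Real.exp_neg]; ring_nf
    rw [he]
    have hepos : (0:ℝ) < Real.exp (Real.log c * α) := Real.exp_pos _
    have hene : Real.exp (Real.log c * α) ≠ 1 := by
      intro h
      apply mul_ne_zero hLne hα
      exact Real.exp_injective (h.trans Real.exp_zero.symm)
    have h1 : 1 - Real.exp (Real.log c * α) ≠ 0 := sub_ne_zero.mpr (Ne.symm hene)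
    field_simp

lemma strictAnti_h (c : ℝ) (hc0 : 0 < c) (hc1 : c < 1) :
    StrictAnti (fun α : ℝ => if α = 0 then -1 / Real.log c else α * c ^ α / (1 - c ^ α)) := by
  have hL : Real.log c < 0 := Real.log_neg hc0 hc1
  have hk : 0 < -1 / Real.log c := div_pos_of_neg_of_neg (by norm_num) hL
  have hmono : StrictMono (fun α : ℝ => -(Real.log c) * α) := by
    intro a b hab
    dsimp only
    nlinarith
  have hanti : StrictAnti (fun α : ℝ => phi0 (-(Real.log c) * α)) :=
    strictAnti_phi0.comp_strictMono hmono
  intro a b hab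
  simp only
  rw [h_eq c hc0 hc1 a, h_eq c hc0 hc1 b]
  exact mul_lt_mul_of_pos_left (hanti hab) hk

lemma genRAI_eq (F f : ℝ → ℝ) (x : ℝ) (hF0 : 0 < F x) (α : ℝ) :
    genRAI F f α x = (x * f x / F x) *
      (if α = 0 then -1 / Real.log (F x) else α * F x ^ α / (1 - F x ^ α)) := by
  unfold genRAI
  by_cases hα : α = 0
  · subst hα
    rw [if_pos rfl, if_pos rfl]
    ring
  · rw [if_neg hα, if_neg hα, Real.rpow_sub hF0, Real.rpow_one]
    ring

/-- The map `α ↦ L̆_α(x)` is strictly decreasing on ℝ; equivalently, for `0 < c < 1`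
the function `h_c(α) = α c^α / (1 - c^α)` (extended by continuity with
`h_c(0) = -1 / log c`) is strictly decreasing on ℝ. -/
theorem stmt_0 (F f : ℝ → ℝ) (x : ℝ) (hx : 0 < x)
    (hF0 : 0 < F x) (hF1 : F x < 1) (hf : 0 < f x)
    (c : ℝ) (hc0 : 0 < c) (hc1 : c < 1) :
    StrictAnti (fun α : ℝ => genRAI F f α x) ∧
    StrictAnti (fun α : ℝ =>
      if α = 0 then -1 / Real.log c else α * c ^ α / (1 - c ^ α)) := by
  refine ⟨?_, strictAnti_h c hc0 hc1⟩
  have h := strictAnti_h (F x) hF0 hF1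
  have hk : 0 < x * f x / F x := div_pos (mul_pos hx hf) hF0
  intro a b hab
  simp only [genRAI_eq F f x hF0]
  exact mul_lt_mul_of_pos_left (h hab) hk
end

section
/- Let α < 0 and let X be a non-negative absolutely continuous random variable with cumulative distribution function F, differentiable on (0, +∞) with derivative f, and satisfying 0 < F(x) < 1 for all x > 0. Then for every a ∈ (0, +∞) and every x ∈ (0, +∞), F(x) = [1 − (1 − F(a)^α) exp(−∫_a^x L̆_α(t)/t dt)]^{1/α}, where L̆_α is the α-generalized reversed aging intensity function of X. -/
/-- For `α < 0`, the cdf `F` of a non-negative absolutely continuous random variable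
and its α-generalized reversed aging intensity `L̆_α` are related, for every
`a ∈ (0,∞)` and `x ∈ (0,∞)`, by
`F(x) = [1 - (1 - F(a)^α) exp(-∫_a^x L̆_α(t)/t dt)]^(1/α)`. -/
theorem stmt_1 (α : ℝ) (hα : α < 0) (F f : ℝ → ℝ)
    (hmono : Monotone F)
    (hd : ∀ x ∈ Set.Ioi (0:ℝ), HasDerivAt F (f x) x)
    (hF : ∀ x ∈ Set.Ioi (0:ℝ), 0 < F x ∧ F x < 1)
    (hfi : ∀ u v : ℝ, 0 < u → 0 < v → IntervalIntegrable f MeasureTheory.volume u v) :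
    ∀ a ∈ Set.Ioi (0:ℝ), ∀ x ∈ Set.Ioi (0:ℝ),
      F x = (1 - (1 - F a ^ α) *
        Real.exp (-∫ t in a..x, genRAI F f α t / t)) ^ (1/α) := by
  intro a ha x hx
  have hα' : α ≠ 0 := ne_of_lt hα
  have ha0 : (0:ℝ) < a := ha
  have hx0 : (0:ℝ) < x := hx
  have hsub : Set.uIcc a x ⊆ Set.Ioi (0:ℝ) := by
    intro t ht
    have : min a x ≤ t := (Set.mem_uIcc.mp ht).elim (fun h => le_trans (min_le_left _ _) h.1)
      (fun h => le_trans (min_le_right _ _) h.1)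
    exact lt_of_lt_of_le (lt_min ha0 hx0) this
  have hpow : ∀ t ∈ Set.Ioi (0:ℝ), 1 < F t ^ α := by
    intro t ht
    exact (Real.one_lt_rpow_iff_of_pos (hF t ht).1).2 (Or.inr ⟨(hF t ht).2, hα⟩)
  set φ : ℝ → ℝ := fun t => Real.log (F t ^ α - 1) with hφ
  set g : ℝ → ℝ := fun t => f t * (α * F t ^ (α - 1) / (F t ^ α - 1)) with hg
  have hderiv : ∀ t ∈ Set.uIcc a x, HasDerivAt φ (g t) t := by
    intro t ht
    have ht0 : t ∈ Set.Ioi (0:ℝ) := hsub ht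
    have hFt : 0 < F t := (hF t ht0).1
    have h1 : HasDerivAt (fun s => F s ^ α - 1) (f t * α * F t ^ (α - 1)) t := by
      exact ((hd t ht0).rpow_const (Or.inl (ne_of_gt hFt))).sub_const 1
    have h2 : F t ^ α - 1 ≠ 0 := ne_of_gt (by linarith [hpow t ht0])
    have := h1.log h2
    convert this using 1
    simp [hg]; ring
  have hcontF : ContinuousOn F (Set.uIcc a x) := by
    intro t ht
    exact ((hd t (hsub ht)).continuousAt).continuousWithinAt
  have hgi : IntervalIntegrable g MeasureTheory.volume a x := by
    apply (hfi a x ha0 hx0).mul_continuousOn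
    apply ContinuousOn.div
    · exact (continuousOn_const.mul ((hcontF.rpow_const (fun t ht =>
        Or.inl (ne_of_gt (hF t (hsub ht)).1)))))
    · exact (hcontF.rpow_const (fun t ht =>
        Or.inl (ne_of_gt (hF t (hsub ht)).1))).sub continuousOn_const
    · intro t ht
      exact ne_of_gt (by linarith [hpow t (hsub ht)])
  have hint : (∫ t in a..x, g t) = φ x - φ a :=
    intervalIntegral.integral_eq_sub_of_hasDerivAt hderiv hgi
  have heq : Set.EqOn (fun t => genRAI F f α t / t) (fun t => -g t) (Set.uIcc a x) := by
    intro t ht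
    have ht0 : (0:ℝ) < t := hsub ht
    have h2 : F t ^ α - 1 ≠ 0 := ne_of_gt (by linarith [hpow t (hsub ht)])
    simp only [genRAI, if_neg hα', hg]
    have hne : (1 : ℝ) - F t ^ α ≠ 0 := by
      intro h; apply h2; linarith [sub_eq_zero.mp h]
    field_simp
    ring
  have hint2 : (∫ t in a..x, genRAI F f α t / t) = -(φ x - φ a) := by
    rw [intervalIntegral.integral_congr heq, intervalIntegral.integral_neg, hint]
  have hxp : 0 < F x ^ α - 1 := by linarith [hpow x hx]
  have hap : 0 < F a ^ α - 1 := by linarith [hpow a ha]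
  have hexp : Real.exp (-∫ t in a..x, genRAI F f α t / t)
      = (F x ^ α - 1) / (F a ^ α - 1) := by
    rw [hint2, neg_neg, hφ]
    rw [Real.exp_sub, Real.exp_log hxp, Real.exp_log hap]
  rw [hexp]
  have hkey : 1 - (1 - F a ^ α) * ((F x ^ α - 1) / (F a ^ α - 1)) = F x ^ α := by
    field_simp
    ring
  rw [hkey, one_div, Real.rpow_rpow_inv (le_of_lt (hF x hx).1) hα']
end

section
/- Let α < 0, a ∈ (0, +∞), and let L̆ : (0, +∞) → ℝ be a function such that t ↦ L̆(t)/t is locally integrable on (0, +∞) and satisfying: (1) 0 ≤ L̆(x) < +∞ for all x > 0; (2) lim_{x→0⁺} ∫_x^a L̆(t)/t dt = +∞; (3) lim_{x→+∞} ∫_a^x L̆(t)/t dt = +∞. Then for every k > 0 the function F_k(x) = [1 − kα exp(−∫_a^x L̆(t)/t dt)]^{1/α}, x ∈ (0, +∞), is continuous and nondecreasing on (0, +∞), with lim_{x→0⁺} F_k(x) = 0 and lim_{x→+∞} F_k(x) = 1; that is, F_k is the cumulative distribution function of a positive absolutely continuous random variable. -/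
/-- The candidate cdf built from a prescribed reversed aging intensity `L` for `α < 0`:
`F_k(x) = [1 - k α exp(-∫_a^x L(t)/t dt)]^(1/α)`. -/
noncomputable def Fneg (α a k : ℝ) (L : ℝ → ℝ) (x : ℝ) : ℝ :=
  (1 - k * α * Real.exp (-∫ t in a..x, L t / t)) ^ (1/α)

/-- For `α < 0`, a nonnegative function `L̆` on `(0,∞)` whose integral `∫ L̆(t)/t dt`
diverges both at `0⁺` and at `+∞` gives rise, for every `k > 0`, to a bona fide cdf
`F_k(x) = [1 - kα exp(-∫_a^x L̆(t)/t dt)]^(1/α)` of a positive absolutely continuous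
random variable: `F_k` is continuous and nondecreasing on `(0,∞)`, tends to `0`
as `x → 0⁺` and to `1` as `x → +∞`. -/
theorem stmt_2 (α : ℝ) (hα : α < 0) (a : ℝ) (ha : 0 < a) (L : ℝ → ℝ)
    (hLi : MeasureTheory.LocallyIntegrableOn (fun t => L t / t) (Set.Ioi 0)
      MeasureTheory.volume)
    (hL0 : ∀ x > (0:ℝ), 0 ≤ L x)
    (h2 : Filter.Tendsto (fun x => ∫ t in x..a, L t / t)
      (nhdsWithin (0:ℝ) (Set.Ioi 0)) Filter.atTop)
    (h3 : Filter.Tendsto (fun x => ∫ t in a..x, L t / t) Filter.atTop Filter.atTop)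
    (k : ℝ) (hk : 0 < k) :
    ContinuousOn (Fneg α a k L) (Set.Ioi 0) ∧
    MonotoneOn (Fneg α a k L) (Set.Ioi 0) ∧
    Filter.Tendsto (Fneg α a k L) (nhdsWithin (0:ℝ) (Set.Ioi 0)) (nhds 0) ∧
    Filter.Tendsto (Fneg α a k L) Filter.atTop (nhds 1) := by
  classical
  open MeasureTheory Filter Set in
  set f : ℝ → ℝ := fun t => L t / t with hfdef
  set G : ℝ → ℝ := fun x => ∫ t in a..x, f t with hGdef
  have hkα : k * α < 0 := mul_neg_of_pos_of_neg hk hα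
  have hinvα : 1/α ≤ 0 := le_of_lt (div_neg_of_pos_of_neg one_pos hα)
  have hFeq : Fneg α a k L = fun x => (1 - k * α * Real.exp (-G x)) ^ (1/α) := rfl
  -- interval integrability
  have hInt : ∀ x > (0:ℝ), ∀ y > (0:ℝ), IntervalIntegrable f volume x y := by
    intro x hx y hy
    rw [intervalIntegrable_iff']
    refine hLi.integrableOn_compact_subset ?_ isCompact_uIcc
    intro t ht
    exact lt_of_lt_of_le (lt_min hx hy) ht.1
  -- positivity of the base
  have hBpos : ∀ x : ℝ, (0:ℝ) < 1 - k * α * Real.exp (-G x) := by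
    intro x
    nlinarith [Real.exp_pos (-G x)]
  -- monotonicity of G
  have hGmono : MonotoneOn G (Set.Ioi 0) := by
    intro x hx y hy hxy
    have h1 : IntervalIntegrable f volume a x := hInt a ha x hx
    have h2' : IntervalIntegrable f volume x y := hInt x hx y hy
    have heq : G x + ∫ t in x..y, f t = G y :=
      intervalIntegral.integral_add_adjacent_intervals h1 h2'
    have hnn : 0 ≤ ∫ t in x..y, f t := by
      refine intervalIntegral.integral_nonneg hxy ?_
      intro u hu
      have hu0 : (0:ℝ) < u := lt_of_lt_of_le hx hu.1
      exact div_nonneg (hL0 u hu0) hu0.le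
    linarith
  -- continuity of G
  have hGcont : ContinuousOn G (Set.Ioi 0) := by
    intro x hx
    have hx0 : (0:ℝ) < x := hx
    have hhalf : (0:ℝ) < x/2 := by linarith
    have hle : x/2 ≤ x+1 := by linarith
    have hintH : IntervalIntegrable f volume (x/2) (x+1) := hInt _ hhalf _ (by linarith)
    have hcH : ContinuousOn (fun b => ∫ t in (x/2)..b, f t) (Set.uIcc (x/2) (x+1)) :=
      intervalIntegral.continuousOn_primitive_interval' hintH (Set.left_mem_uIcc)
    have huIcc : Set.uIcc (x/2) (x+1) = Set.Icc (x/2) (x+1) := Set.uIcc_of_le hle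
    have hmem : Set.Icc (x/2) (x+1) ∈ nhds x := Icc_mem_nhds (by linarith) (by linarith)
    have hH : ContinuousAt (fun b => ∫ t in (x/2)..b, f t) x := by
      refine ContinuousOn.continuousAt ?_ hmem
      rwa [huIcc] at hcH
    have hGeq : ∀ b > (0:ℝ), G b = (∫ t in a..(x/2), f t) + ∫ t in (x/2)..b, f t := by
      intro b hb
      exact (intervalIntegral.integral_add_adjacent_intervals (hInt a ha _ hhalf)
        (hInt _ hhalf b hb)).symm
    have hCA : ContinuousAt (fun b => (∫ t in a..(x/2), f t) + ∫ t in (x/2)..b, f t) x :=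
      continuousAt_const.add hH
    refine (hCA.continuousWithinAt).congr ?_ ?_
    · intro b hb; exact hGeq b hb
    · exact hGeq x hx0
  -- continuity of F
  have hFcont : ContinuousOn (Fneg α a k L) (Set.Ioi 0) := by
    rw [hFeq]
    have hBcont : ContinuousOn (fun x => 1 - k * α * Real.exp (-G x)) (Set.Ioi 0) :=
      continuousOn_const.sub
        (continuousOn_const.mul ((Real.continuous_exp.comp continuous_neg).comp_continuousOn
          hGcont))
    exact hBcont.rpow_const (fun x _ => Or.inl (ne_of_gt (hBpos x)))
  -- monotonicity of F
  have hFmono : MonotoneOn (Fneg α a k L) (Set.Ioi 0) := by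
    intro x hx y hy hxy
    have hG : G x ≤ G y := hGmono hx hy hxy
    have hBle : 1 - k * α * Real.exp (-G y) ≤ 1 - k * α * Real.exp (-G x) := by
      have := Real.exp_le_exp.mpr (neg_le_neg hG)
      nlinarith
    exact Real.rpow_le_rpow_of_nonpos (hBpos y) hBle hinvα
  refine ⟨hFcont, hFmono, ?_, ?_⟩
  -- limit at 0⁺
  · have hG0 : Filter.Tendsto G (nhdsWithin (0:ℝ) (Set.Ioi 0)) Filter.atBot := by
      have h := Filter.tendsto_neg_atTop_atBot.comp h2
      refine h.congr (fun x => ?_)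
      show -(∫ t in x..a, f t) = G x
      rw [hGdef]
      rw [intervalIntegral.integral_symm, neg_neg]
    have hE : Filter.Tendsto (fun x => Real.exp (-G x)) (nhdsWithin (0:ℝ) (Set.Ioi 0))
        Filter.atTop :=
      Real.tendsto_exp_atTop.comp (Filter.tendsto_neg_atBot_atTop.comp hG0)
    have hB : Filter.Tendsto (fun x => 1 - k * α * Real.exp (-G x))
        (nhdsWithin (0:ℝ) (Set.Ioi 0)) Filter.atTop := by
      have h1 : Filter.Tendsto (fun x => (-(k*α)) * Real.exp (-G x))
          (nhdsWithin (0:ℝ) (Set.Ioi 0)) Filter.atTop :=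
        Filter.Tendsto.const_mul_atTop (by linarith) hE
      have h2' := Filter.tendsto_atTop_add_const_left _ 1 h1
      refine h2'.congr (fun x => by ring)
    have h1α : 1/α < 0 := div_neg_of_pos_of_neg one_pos hα
    have hpow : Filter.Tendsto (fun y : ℝ => y ^ (1/α)) Filter.atTop (nhds 0) := by
      have := tendsto_rpow_neg_atTop (neg_pos.mpr h1α)
      simpa using this
    exact hpow.comp hB
  -- limit at +∞
  · have hGtop : Filter.Tendsto G Filter.atTop Filter.atTop := h3
    have hE : Filter.Tendsto (fun x => Real.exp (-G x)) Filter.atTop (nhds 0) :=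
      Real.tendsto_exp_atBot.comp (Filter.tendsto_neg_atTop_atBot.comp hGtop)
    have hB : Filter.Tendsto (fun x => 1 - k * α * Real.exp (-G x)) Filter.atTop (nhds 1) := by
      have h1 : Filter.Tendsto (fun x => (1:ℝ) - k * α * Real.exp (-G x)) Filter.atTop
          (nhds (1 - k * α * 0)) :=
        Filter.Tendsto.sub tendsto_const_nhds (Filter.Tendsto.mul tendsto_const_nhds hE)
      simpa using h1
    have hpow : Filter.Tendsto (fun y : ℝ => y ^ (1/α)) (nhds 1) (nhds 1) := by
      have := (Real.continuousAt_rpow_const 1 (1/α) (Or.inl one_ne_zero)).tendsto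
      simpa [Real.one_rpow] using this
    exact hpow.comp hB
end

section
/- Let α < 0, a ∈ (0, +∞), and let L̆ : (0, +∞) → ℝ be a function such that t ↦ L̆(t)/t is locally integrable on (0, +∞), satisfying 0 ≤ L̆(x) < +∞ for all x > 0, lim_{x→0⁺} ∫_x^a L̆(t)/t dt = +∞ and lim_{x→+∞} ∫_a^x L̆(t)/t dt = +∞. For k > 0 set F_k(x) = [1 − kα exp(−∫_a^x L̆(t)/t dt)]^{1/α} on (0, +∞). Then at every point x > 0 at which L̆ is continuous, F_k is differentiable with derivative f_k(x) ≥ 0, and the α-generalized reversed aging intensity of F_k equals L̆ there: α x F_k(x)^{α−1} f_k(x)/(1 − F_k(x)^α) = L̆(x). -/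
/-!
Write `Λ(y) = ∫_a^y L(t)/t dt` and `u = 1 - kα e^{-Λ}`, so that `F_k = u^{1/α}` and
`1 - F_k^α = 1 - u = kα e^{-Λ}`. By the fundamental theorem of calculus `Λ'(x) = L(x)/x`,
hence `u' = (1 - u) Λ'` and `f_k = (1/α) u^{1/α - 1} u'`. In the aging intensity the powers
of `u` cancel, leaving `x Λ'(x) = L(x)`; the sign of `f_k` is that of `(1 - u)/α = k e^{-Λ} > 0`.
-/

open Real Set

noncomputable def genReversedAgingIntensity (α x Fx fx : ℝ) : ℝ :=
  α * x * Fx ^ (α - 1) * fx / (1 - Fx ^ α)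

theorem hasDerivAt_integral_of_locallyIntegrableOn {g : ℝ → ℝ} {U : Set ℝ} {a x : ℝ}
    (hU : IsOpen U) (hg : MeasureTheory.LocallyIntegrableOn g U) (hax : uIcc a x ⊆ U)
    (hgx : ContinuousAt g x) :
    HasDerivAt (fun y => ∫ t in a..y, g t) (g x) x :=
  intervalIntegral.integral_hasDerivAt_right
    (hg.integrableOn_compact_subset hax isCompact_uIcc).intervalIntegrable
    ⟨U, hU.mem_nhds (hax right_mem_uIcc), hg.aestronglyMeasurable⟩ hgx

theorem hasDerivAt_rpow_one_sub_mul_exp_neg {Λ : ℝ → ℝ} {ℓ c p x : ℝ}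
    (hΛ : HasDerivAt Λ ℓ x) (hu : 1 - c * exp (-Λ x) ≠ 0) :
    HasDerivAt (fun y => (1 - c * exp (-Λ y)) ^ p)
      ((1 - (1 - c * exp (-Λ x))) * ℓ * p * (1 - c * exp (-Λ x)) ^ (p - 1)) x := by
  convert ((hΛ.neg.exp.const_mul c).const_sub 1).rpow_const (p := p) (Or.inl hu) using 1 <;>
    simp only [Pi.neg_apply]
  ring

theorem genReversedAgingIntensity_rpow_inv {α u ℓ : ℝ} (x : ℝ) (hα : α ≠ 0) (hu : 0 < u)
    (hu1 : u ≠ 1) :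
    genReversedAgingIntensity α x (u ^ (1 / α)) ((1 - u) * ℓ * (1 / α) * u ^ (1 / α - 1))
      = x * ℓ := by
  have hpow : (u ^ (1 / α)) ^ α = u := by
    rw [← rpow_mul hu.le, one_div_mul_cancel hα, rpow_one]
  have hcancel : (u ^ (1 / α)) ^ (α - 1) * u ^ (1 / α - 1) = 1 := by
    rw [← rpow_mul hu.le, ← rpow_add hu, show 1 / α * (α - 1) + (1 / α - 1) = 0 by
      field_simp; ring, rpow_zero]
  have h1u : 1 - u ≠ 0 := sub_ne_zero.mpr hu1.symm
  have hαinv : α * (1 / α) = 1 := mul_one_div_cancel hα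
  unfold genReversedAgingIntensity
  rw [hpow, div_eq_iff h1u]
  linear_combination (x * ℓ * (1 - u) * α * (1 / α)) * hcancel + (x * ℓ * (1 - u)) * hαinv

theorem stmt_3_general (α : ℝ) (hα : α < 0) (a : ℝ) (ha : 0 < a) (L : ℝ → ℝ)
    (hLi : MeasureTheory.LocallyIntegrableOn (fun t => L t / t) (Set.Ioi 0)
      MeasureTheory.volume)
    (hL0 : ∀ x > (0:ℝ), 0 ≤ L x)
    (k : ℝ) (hk : 0 < k)
    (x : ℝ) (hx : 0 < x) (hc : ContinuousWithinAt L (Set.Ioi 0) x) :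
    ∃ d : ℝ, HasDerivAt (Fneg α a k L) d x ∧ 0 ≤ d ∧
      α * x * Fneg α a k L x ^ (α - 1) * d / (1 - Fneg α a k L x ^ α) = L x := by
  have hΛ : HasDerivAt (fun y => ∫ t in a..y, L t / t) (L x / x) x :=
    hasDerivAt_integral_of_locallyIntegrableOn isOpen_Ioi hLi
      (ordConnected_Ioi.uIcc_subset ha hx)
      ((hc.continuousAt (Ioi_mem_nhds hx)).div continuousAt_id hx.ne')
  set u := 1 - k * α * exp (-∫ t in a..x, L t / t)
  have hu : 1 < u := by
    have : k * α * exp (-∫ t in a..x, L t / t) < 0 :=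
      mul_neg_of_neg_of_pos (mul_neg_of_pos_of_neg hk hα) (exp_pos _)
    linarith
  refine ⟨_, hasDerivAt_rpow_one_sub_mul_exp_neg hΛ (zero_lt_one.trans hu).ne', ?_, ?_⟩
  · have : 0 ≤ (1 - u) * (L x / x) * (1 / α) :=
      mul_nonneg_of_nonpos_of_nonpos
        (mul_nonpos_of_nonpos_of_nonneg (by linarith) (div_nonneg (hL0 x hx) hx.le))
        (one_div_neg.mpr hα).le
    positivity
  · rw [← genReversedAgingIntensity, Fneg,
      genReversedAgingIntensity_rpow_inv x hα.ne (zero_lt_one.trans hu) hu.ne',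
      mul_div_cancel₀ _ hx.ne']

/-- For `α < 0` and `L̆` as in the construction of `F_k`, at every point `x > 0`
at which `L̆` is continuous, `F_k` is differentiable with nonnegative derivative
`f_k(x)`, and the α-generalized reversed aging intensity of `F_k` equals `L̆` there:
`α x F_k(x)^(α-1) f_k(x) / (1 - F_k(x)^α) = L̆(x)`. -/
theorem stmt_3 (α : ℝ) (hα : α < 0) (a : ℝ) (ha : 0 < a) (L : ℝ → ℝ)
    (hLi : MeasureTheory.LocallyIntegrableOn (fun t => L t / t) (Set.Ioi 0)
      MeasureTheory.volume)
    (hL0 : ∀ x > (0:ℝ), 0 ≤ L x)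
    (h2 : Filter.Tendsto (fun x => ∫ t in x..a, L t / t)
      (nhdsWithin (0:ℝ) (Set.Ioi 0)) Filter.atTop)
    (h3 : Filter.Tendsto (fun x => ∫ t in a..x, L t / t) Filter.atTop Filter.atTop)
    (k : ℝ) (hk : 0 < k)
    (x : ℝ) (hx : 0 < x) (hc : ContinuousWithinAt L (Set.Ioi 0) x) :
    ∃ d : ℝ, HasDerivAt (Fneg α a k L) d x ∧ 0 ≤ d ∧
      α * x * Fneg α a k L x ^ (α - 1) * d / (1 - Fneg α a k L x ^ α) = L x :=
  stmt_3_general α hα a ha L hLi hL0 k hk x hx hc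
end

section
/- Let α < 0 and let X be a non-negative absolutely continuous random variable with cumulative distribution function F, differentiable on (0, +∞) with derivative f, satisfying 0 < F(x) < 1 for all x > 0, lim_{x→0⁺} F(x) = 0 and lim_{x→+∞} F(x) = 1. Then for every a > 0 the α-generalized reversed aging intensity L̆_α of X satisfies: (1) 0 ≤ L̆_α(x) < +∞ for all x > 0; (2) lim_{x→0⁺} ∫_x^a L̆_α(t)/t dt = +∞; (3) lim_{x→+∞} ∫_a^x L̆_α(t)/t dt = +∞. -/
open Filter Set Real Topology intervalIntegral

section

variable {F f : ℝ → ℝ} {α x : ℝ}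

lemma genRAI_nonneg (hα : α < 0) (hx : 0 ≤ x) (hF0 : 0 < F x) (hF1 : F x < 1)
    (hf : 0 ≤ f x) : 0 ≤ genRAI F f α x := by
  rw [genRAI, if_neg hα.ne]
  apply div_nonneg_of_nonpos
  · have : 0 ≤ x * F x ^ (α - 1) * f x := by positivity
    nlinarith
  · linarith [one_lt_rpow_of_pos_of_lt_one_of_neg hF0 hF1 hα]

lemma hasDerivAt_neg_log_rpow_sub_one (hα : α ≠ 0) (hx : x ≠ 0) (hd : HasDerivAt F (f x) x)
    (hF0 : F x ≠ 0) (hF1 : F x ^ α ≠ 1) :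
    HasDerivAt (fun t => -log (F t ^ α - 1)) (genRAI F f α x / x) x := by
  refine (((hd.rpow_const (Or.inl hF0)).sub_const 1).log (sub_ne_zero.mpr hF1)).neg.congr_deriv ?_
  rw [genRAI, if_neg hα]
  field_simp [sub_ne_zero.mpr hF1, sub_ne_zero.mpr hF1.symm]
  ring

lemma integral_genRAI_div_eq (hα : α < 0) (hd : ∀ x ∈ Ioi (0 : ℝ), HasDerivAt F (f x) x)
    (hF : ∀ x ∈ Ioi (0 : ℝ), 0 < F x ∧ F x < 1) (hf : ∀ x ∈ Ioi (0 : ℝ), 0 ≤ f x)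
    {u v : ℝ} (hu : 0 < u) (hv : 0 < v) :
    ∫ t in u..v, genRAI F f α t / t = log (F u ^ α - 1) - log (F v ^ α - 1) := by
  have hpos : ∀ t ∈ uIcc u v, 0 < t := fun t ht => (lt_min hu hv).trans_le ht.1
  have hderiv : ∀ t ∈ uIcc u v,
      HasDerivAt (fun t => -log (F t ^ α - 1)) (genRAI F f α t / t) t := fun t ht =>
    have ⟨hF0, hF1⟩ := hF t (hpos t ht)
    hasDerivAt_neg_log_rpow_sub_one hα.ne (hpos t ht).ne' (hd t (hpos t ht)) hF0.ne'
      (one_lt_rpow_of_pos_of_lt_one_of_neg hF0 hF1 hα).ne'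
  rw [integral_eq_sub_of_hasDerivAt hderiv, neg_sub_neg]
  refine intervalIntegrable_deriv_of_nonneg (HasDerivAt.continuousOn hderiv)
    (fun t ht => hderiv t (Ioo_subset_Icc_self ht)) fun t ht => ?_
  have ht := hpos t (Ioo_subset_Icc_self ht)
  exact div_nonneg (genRAI_nonneg hα ht.le (hF t ht).1 (hF t ht).2 (hf t ht)) ht.le

end

lemma tendsto_log_rpow_sub_one_nhdsGT_zero {α : ℝ} (hα : α < 0) :
    Tendsto (fun y : ℝ => log (y ^ α - 1)) (𝓝[>] 0) atTop :=
  tendsto_log_atTop.comp <|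
    tendsto_atTop_add_const_right _ (-1) (tendsto_rpow_neg_nhdsGT_zero hα)

lemma tendsto_log_rpow_sub_one_nhdsLT_one {α : ℝ} (hα : α < 0) :
    Tendsto (fun y : ℝ => log (y ^ α - 1)) (𝓝[<] 1) atBot := by
  have hcont : Tendsto (fun y : ℝ => y ^ α - 1) (𝓝[<] 1) (𝓝 0) := by
    simpa using ((continuousAt_rpow_const 1 α (Or.inl one_ne_zero)).tendsto.sub_const 1).mono_left
      nhdsWithin_le_nhds
  have hgt : ∀ᶠ y in 𝓝[<] (1 : ℝ), y ^ α - 1 ∈ Ioi 0 := by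
    filter_upwards [Ioo_mem_nhdsLT zero_lt_one] with y hy
    exact sub_pos.mpr (one_lt_rpow_of_pos_of_lt_one_of_neg hy.1 hy.2 hα)
  exact tendsto_log_nhdsGT_zero.comp (tendsto_nhdsWithin_iff.mpr ⟨hcont, hgt⟩)

theorem stmt_4_general (α : ℝ) (hα : α < 0) (F f : ℝ → ℝ)
    (hmono : Monotone F)
    (hd : ∀ x ∈ Set.Ioi (0:ℝ), HasDerivAt F (f x) x)
    (hF : ∀ x ∈ Set.Ioi (0:ℝ), 0 < F x ∧ F x < 1)
    (hF0 : Filter.Tendsto F (nhdsWithin (0:ℝ) (Set.Ioi 0)) (nhds 0))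
    (hF1 : Filter.Tendsto F Filter.atTop (nhds 1))
    (a : ℝ) (ha : 0 < a) :
    (∀ x > (0:ℝ), 0 ≤ genRAI F f α x) ∧
    Filter.Tendsto (fun x => ∫ t in x..a, genRAI F f α t / t)
      (nhdsWithin (0:ℝ) (Set.Ioi 0)) Filter.atTop ∧
    Filter.Tendsto (fun x => ∫ t in a..x, genRAI F f α t / t)
      Filter.atTop Filter.atTop := by
  have hf : ∀ x ∈ Ioi (0 : ℝ), 0 ≤ f x := fun x hx => (hd x hx).nonneg_of_monotone hmono
  have hF0' : Tendsto F (𝓝[>] 0) (𝓝[>] 0) := tendsto_nhdsWithin_iff.mpr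
    ⟨hF0, eventually_mem_nhdsWithin.mono fun x hx => (hF x hx).1⟩
  have hF1' : Tendsto F atTop (𝓝[<] 1) := tendsto_nhdsWithin_iff.mpr
    ⟨hF1, (eventually_gt_atTop 0).mono fun x hx => (hF x hx).2⟩
  refine ⟨fun x hx => genRAI_nonneg hα hx.le (hF x hx).1 (hF x hx).2 (hf x hx), ?_, ?_⟩
  · refine (tendsto_atTop_add_const_right _ (-log (F a ^ α - 1))
      ((tendsto_log_rpow_sub_one_nhdsGT_zero hα).comp hF0')).congr' ?_
    filter_upwards [self_mem_nhdsWithin] with x hx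
    exact ((integral_genRAI_div_eq hα hd hF hf hx ha).trans (sub_eq_add_neg _ _)).symm
  · refine (tendsto_atTop_add_const_left _ (log (F a ^ α - 1)) (tendsto_neg_atBot_atTop.comp
      ((tendsto_log_rpow_sub_one_nhdsLT_one hα).comp hF1'))).congr' ?_
    filter_upwards [eventually_gt_atTop 0] with x hx
    exact ((integral_genRAI_div_eq hα hd hF hf ha hx).trans (sub_eq_add_neg _ _)).symm

/-- For `α < 0`, the α-generalized reversed aging intensity `L̆_α` of a non-negative
absolutely continuous random variable satisfies: (1) `0 ≤ L̆_α(x) < ∞` for all `x > 0`;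
(2) `∫_x^a L̆_α(t)/t dt → +∞` as `x → 0⁺`; (3) `∫_a^x L̆_α(t)/t dt → +∞` as `x → +∞`. -/
theorem stmt_4 (α : ℝ) (hα : α < 0) (F f : ℝ → ℝ)
    (hmono : Monotone F)
    (hd : ∀ x ∈ Set.Ioi (0:ℝ), HasDerivAt F (f x) x)
    (hF : ∀ x ∈ Set.Ioi (0:ℝ), 0 < F x ∧ F x < 1)
    (hfi : ∀ u v : ℝ, 0 < u → 0 < v → IntervalIntegrable f MeasureTheory.volume u v)
    (hF0 : Filter.Tendsto F (nhdsWithin (0:ℝ) (Set.Ioi 0)) (nhds 0))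
    (hF1 : Filter.Tendsto F Filter.atTop (nhds 1))
    (a : ℝ) (ha : 0 < a) :
    (∀ x > (0:ℝ), 0 ≤ genRAI F f α x) ∧
    Filter.Tendsto (fun x => ∫ t in x..a, genRAI F f α t / t)
      (nhdsWithin (0:ℝ) (Set.Ioi 0)) Filter.atTop ∧
    Filter.Tendsto (fun x => ∫ t in a..x, genRAI F f α t / t)
      Filter.atTop Filter.atTop :=
  stmt_4_general α hα F f hmono hd hF hF0 hF1 a ha
end

section
/- Let a ∈ (0, +∞) and let L̆ : (0, +∞) → ℝ be a function such that t ↦ L̆(t)/t is locally integrable on (0, +∞), satisfying 0 ≤ L̆(x) < +∞ for all x > 0, lim_{x→0⁺} ∫_x^a L̆(t)/t dt = +∞ and lim_{x→+∞} ∫_a^x L̆(t)/t dt = +∞. Then for every k > 0 the function F_k(x) = exp[−k exp(−∫_a^x L̆(t)/t dt)], x ∈ (0, +∞), is continuous and nondecreasing with lim_{x→0⁺} F_k(x) = 0 and lim_{x→+∞} F_k(x) = 1, and at every point x > 0 at which L̆ is continuous, F_k is differentiable with derivative f_k(x) and −x f_k(x)/(F_k(x) log F_k(x)) = L̆(x);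 that is, L̆ is the reversed aging intensity function of every member of the family {F_k : k > 0}. -/
/-!
With `G(x) = ∫_a^x L̆(t)/t dt`, the candidate is `F_k = Φ_k ∘ G` for the Gumbel-type profile
`Φ_k(g) = exp(-k e^{-g})`. As `L̆ ≥ 0`, `G` is continuous and nondecreasing, with `G → -∞` at `0⁺`
and `G → +∞` at `+∞`; `Φ_k` is continuous and nondecreasing from `0` at `-∞` to `1` at `+∞`.
At a continuity point of `L̆` we have `G'(x) = L̆(x)/x`, and since `log F_k = -k e^{-G}` cancels
against the chain-rule factor of `F_k'`, the reversed aging intensity reduces to `x G'(x) = L̆(x)`.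
-/

open MeasureTheory Filter Set Real intervalIntegral Topology

/-- The candidate cdf built from a prescribed reversed aging intensity `L` for `α = 0`:
`F_k(x) = exp[-k exp(-∫_a^x L(t)/t dt)]`. -/
noncomputable def Fzero (a k : ℝ) (L : ℝ → ℝ) (x : ℝ) : ℝ :=
  Real.exp (-(k * Real.exp (-∫ t in a..x, L t / t)))

namespace MeasureTheory.LocallyIntegrableOn

variable {f : ℝ → ℝ} {s : Set ℝ} {a x y : ℝ}

theorem intervalIntegrable_of_mem (hf : LocallyIntegrableOn f s) (hs : s.OrdConnected)
    (hx : x ∈ s) (hy : y ∈ s) : IntervalIntegrable f volume x y :=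
  (hf.integrableOn_compact_subset (hs.uIcc_subset hx hy) isCompact_uIcc).intervalIntegrable

theorem continuousOn_primitive (hf : LocallyIntegrableOn f s) (hs : s.OrdConnected)
    (hso : IsOpen s) (ha : a ∈ s) : ContinuousOn (fun x => ∫ t in a..x, f t) s := by
  intro x hx
  obtain ⟨l, u, hxlu, hlu_nhds, hlu_sub⟩ := exists_Icc_mem_subset_of_mem_nhds (hso.mem_nhds hx)
  have hlu : l ≤ u := hxlu.1.trans hxlu.2
  have hl : l ∈ s := hlu_sub ⟨le_rfl, hlu⟩
  have hsplit : EqOn (fun y => (∫ t in a..l, f t) + ∫ t in l..y, f t)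
      (fun y => ∫ t in a..y, f t) (Icc l u) := fun y hy =>
    integral_add_adjacent_intervals (hf.intervalIntegrable_of_mem hs ha hl)
      (hf.intervalIntegrable_of_mem hs hl (hlu_sub hy))
  have hcont : ContinuousOn (fun y => ∫ t in l..y, f t) (Icc l u) := by
    rw [← uIcc_of_le hlu] at hlu_sub ⊢
    exact continuousOn_primitive_interval (hf.integrableOn_compact_subset hlu_sub isCompact_uIcc)
  exact ((continuousOn_const.add hcont).congr hsplit.symm).continuousAt hlu_nhds
    |>.continuousWithinAt

theorem monotoneOn_primitive (hf : LocallyIntegrableOn f s) (hs : s.OrdConnected)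
    (ha : a ∈ s) (hf_nonneg : ∀ x ∈ s, 0 ≤ f x) :
    MonotoneOn (fun x => ∫ t in a..x, f t) s := by
  intro x hx y hy hxy
  have hdiff : (∫ t in a..y, f t) - ∫ t in a..x, f t = ∫ t in x..y, f t :=
    integral_interval_sub_left (hf.intervalIntegrable_of_mem hs ha hy)
      (hf.intervalIntegrable_of_mem hs ha hx)
  have hnonneg : 0 ≤ ∫ t in x..y, f t :=
    intervalIntegral.integral_nonneg hxy fun t ht => hf_nonneg t (hs.out hx hy ht)
  exact sub_nonneg.mp (hdiff ▸ hnonneg)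

theorem hasDerivAt_primitive (hf : LocallyIntegrableOn f s) (hs : s.OrdConnected)
    (hso : IsOpen s) (ha : a ∈ s) (hx : x ∈ s) (hfx : ContinuousAt f x) :
    HasDerivAt (fun x => ∫ t in a..x, f t) (f x) x :=
  integral_hasDerivAt_right (hf.intervalIntegrable_of_mem hs ha hx)
    ⟨s, hso.mem_nhds hx, hf.aestronglyMeasurable⟩ hfx

end MeasureTheory.LocallyIntegrableOn

/-- The profile `g ↦ exp(-k e^{-g})`; for `k = 1` it is the standard Gumbel distribution
function. -/
noncomputable def gumbelCDF (k g : ℝ) : ℝ :=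
  exp (-(k * exp (-g)))

section gumbelCDF

variable {k : ℝ}

theorem continuous_gumbelCDF : Continuous (gumbelCDF k) := by
  unfold gumbelCDF
  fun_prop

theorem monotone_gumbelCDF (hk : 0 ≤ k) : Monotone (gumbelCDF k) := fun _ _ hgh =>
  exp_le_exp.2 <| neg_le_neg <| mul_le_mul_of_nonneg_left (exp_le_exp.2 (neg_le_neg hgh)) hk

theorem tendsto_gumbelCDF_atBot (hk : 0 < k) : Tendsto (gumbelCDF k) atBot (𝓝 0) :=
  tendsto_exp_atBot.comp <| tendsto_neg_atTop_atBot.comp <|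
    (tendsto_exp_atTop.comp tendsto_neg_atBot_atTop).const_mul_atTop hk

theorem tendsto_gumbelCDF_atTop : Tendsto (gumbelCDF k) atTop (𝓝 1) := by
  have h : Tendsto (fun g => -(k * exp (-g))) atTop (𝓝 0) := by
    simpa using ((tendsto_exp_atBot.comp tendsto_neg_atTop_atBot).const_mul k).neg
  have hexp := (continuous_exp.tendsto 0).comp h
  rwa [exp_zero] at hexp

theorem hasDerivAt_gumbelCDF (g : ℝ) :
    HasDerivAt (gumbelCDF k) (k * exp (-g) * gumbelCDF k g) g := by
  unfold gumbelCDF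
  convert ((hasDerivAt_neg g).exp.const_mul k).neg.exp using 1
  · rfl
  · simp only [Pi.neg_apply]
    ring

theorem neg_mul_div_gumbelCDF_mul_log (hk : k ≠ 0) (x g g' : ℝ) :
    -(x * (k * exp (-g) * gumbelCDF k g * g')) / (gumbelCDF k g * log (gumbelCDF k g)) =
      x * g' := by
  have hF : gumbelCDF k g ≠ 0 := (exp_pos _).ne'
  have hlog : log (gumbelCDF k g) = -(k * exp (-g)) := log_exp _
  rw [hlog]
  field_simp

end gumbelCDF

/-- A nonnegative function `L̆` on `(0,∞)` whose integral `∫ L̆(t)/t dt` diverges both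
at `0⁺` and at `+∞` determines, for every `k > 0`, the cdf
`F_k(x) = exp[-k exp(-∫_a^x L̆(t)/t dt)]` of a positive absolutely continuous random
variable (continuous, nondecreasing, with limits `0` at `0⁺` and `1` at `+∞`), and at
every continuity point `x > 0` of `L̆`, `F_k` is differentiable with derivative
`f_k(x)` satisfying `-x f_k(x)/(F_k(x) log F_k(x)) = L̆(x)`; i.e. `L̆` is the reversed
aging intensity function of every member of the family `{F_k : k > 0}`. -/
theorem stmt_5 (a : ℝ) (ha : 0 < a) (L : ℝ → ℝ)
    (hLi : MeasureTheory.LocallyIntegrableOn (fun t => L t / t) (Set.Ioi 0)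
      MeasureTheory.volume)
    (hL0 : ∀ x > (0:ℝ), 0 ≤ L x)
    (h2 : Filter.Tendsto (fun x => ∫ t in x..a, L t / t)
      (nhdsWithin (0:ℝ) (Set.Ioi 0)) Filter.atTop)
    (h3 : Filter.Tendsto (fun x => ∫ t in a..x, L t / t) Filter.atTop Filter.atTop)
    (k : ℝ) (hk : 0 < k) :
    ContinuousOn (Fzero a k L) (Set.Ioi 0) ∧
    MonotoneOn (Fzero a k L) (Set.Ioi 0) ∧
    Filter.Tendsto (Fzero a k L) (nhdsWithin (0:ℝ) (Set.Ioi 0)) (nhds 0) ∧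
    Filter.Tendsto (Fzero a k L) Filter.atTop (nhds 1) ∧
    ∀ x > (0:ℝ), ContinuousWithinAt L (Set.Ioi 0) x →
      ∃ d : ℝ, HasDerivAt (Fzero a k L) d x ∧
        -(x * d) / (Fzero a k L x * Real.log (Fzero a k L x)) = L x := by
  set G : ℝ → ℝ := fun x => ∫ t in a..x, L t / t
  have hF : Fzero a k L = gumbelCDF k ∘ G := rfl
  have hG0 : Tendsto G (𝓝[>] 0) atBot := by
    have hG_symm : G = fun x => -∫ t in x..a, L t / t := funext fun x => integral_symm x a
    exact hG_symm ▸ tendsto_neg_atTop_atBot.comp h2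
  refine ⟨?_, ?_, ?_, ?_, ?_⟩ <;> rw [hF]
  · exact continuous_gumbelCDF.comp_continuousOn
      (hLi.continuousOn_primitive ordConnected_Ioi isOpen_Ioi ha)
  · exact (monotone_gumbelCDF hk.le).comp_monotoneOn
      (hLi.monotoneOn_primitive ordConnected_Ioi ha fun t ht => div_nonneg (hL0 t ht) ht.le)
  · exact (tendsto_gumbelCDF_atBot hk).comp hG0
  · exact tendsto_gumbelCDF_atTop.comp h3
  · intro x hx hLx
    have hG' : HasDerivAt G (L x / x) x :=
      hLi.hasDerivAt_primitive ordConnected_Ioi isOpen_Ioi ha hx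
        ((hLx.continuousAt (Ioi_mem_nhds hx)).div continuousAt_id hx.ne')
    refine ⟨_, (hasDerivAt_gumbelCDF (G x)).comp x hG', ?_⟩
    rw [Function.comp_apply, neg_mul_div_gumbelCDF_mul_log hk.ne', mul_div_cancel₀ _ hx.ne']
end

section
/- Let α > 0 and let X be a non-negative absolutely continuous random variable with cumulative distribution function F, differentiable on (0, +∞) with derivative f, satisfying 0 < F(x) < 1 for all x > 0 and lim_{x→0⁺} F(x) = 0. Then for every x ∈ (0, +∞) the integral ∫_0^x L̆_α(t)/t dt is finite and F(x) = [1 − exp(−∫_0^x L̆_α(t)/t dt)]^{1/α}, where L̆_α is the α-generalized reversed aging intensity function of X. -/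
open Set Filter Topology Real

theorem genRAI_div_self {F f : ℝ → ℝ} {α t : ℝ} (hα : α ≠ 0) (ht : t ≠ 0) :
    genRAI F f α t / t = α * F t ^ (α - 1) * f t / (1 - F t ^ α) := by
  rw [genRAI, if_neg hα]
  field_simp

theorem HasDerivAt.neg_log_one_sub_rpow {F : ℝ → ℝ} {f' α t : ℝ} (hF : HasDerivAt F f' t)
    (hpos : 0 < F t) (hne : F t ^ α ≠ 1) :
    HasDerivAt (fun s => -Real.log (1 - F s ^ α)) (α * F t ^ (α - 1) * f' / (1 - F t ^ α)) t := by
  have hpow : HasDerivAt (fun s => F s ^ α) (f' * α * F t ^ (α - 1)) t :=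
    hF.rpow_const (Or.inl hpos.ne')
  exact ((hpow.const_sub 1).log (sub_ne_zero.2 hne.symm)).neg.congr_deriv (by ring)

theorem tendsto_neg_log_one_sub_rpow {ι : Type*} {l : Filter ι} {F : ι → ℝ} {α : ℝ}
    (hα : 0 < α) (hF : Tendsto F l (𝓝 0)) :
    Tendsto (fun t => -log (1 - F t ^ α)) l (𝓝 0) := by
  have hpow : Tendsto (fun t => F t ^ α) l (𝓝 0) := by
    simpa [zero_rpow hα.ne'] using hF.rpow_const (Or.inr hα.le)
  have hcont : ContinuousAt (fun y : ℝ => -log (1 - y)) 0 := by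
    fun_prop (disch := norm_num)
  simpa [Function.comp_def] using hcont.tendsto.comp hpow

theorem intervalIntegral.integral_eq_sub_of_hasDerivAt_of_nonneg_of_tendsto
    {g g' : ℝ → ℝ} {a b y : ℝ} (hab : a < b) (hderiv : ∀ x ∈ Ioc a b, HasDerivAt g (g' x) x)
    (hpos : ∀ x ∈ Ioo a b, 0 ≤ g' x) (hlim : Tendsto g (𝓝[>] a) (𝓝 y)) :
    IntervalIntegrable g' MeasureTheory.volume a b ∧ ∫ x in a..b, g' x = g b - y := by
  classical
  have hcont : ContinuousOn (Function.update g a y) (Icc a b) := by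
    rw [continuousOn_update_iff, Icc_sdiff_left]
    refine ⟨fun x hx => (hderiv x hx).continuousAt.continuousWithinAt, fun _ => ?_⟩
    exact hlim.mono_left (nhdsWithin_mono _ Ioc_subset_Ioi_self)
  have hderiv' : ∀ x ∈ Ioo a b, HasDerivAt (Function.update g a y) (g' x) x := fun x hx =>
    (hderiv x (Ioo_subset_Ioc_self hx)).congr_of_eventuallyEq <|
      (eventually_ne_nhds hx.1.ne').mono fun _ hz => Function.update_of_ne hz _ _
  have hint : IntervalIntegrable g' MeasureTheory.volume a b :=
    (intervalIntegrable_iff_integrableOn_Ioc_of_le hab.le).2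
      (integrableOn_deriv_of_nonneg hcont hderiv' hpos)
  refine ⟨hint, ?_⟩
  rw [integral_eq_sub_of_hasDerivAt_of_le hab.le hcont hderiv' hint, Function.update_self,
    Function.update_of_ne hab.ne']

theorem stmt_6_general (α : ℝ) (hα : 0 < α) (F f : ℝ → ℝ)
    (hmono : Monotone F)
    (hd : ∀ x ∈ Set.Ioi (0:ℝ), HasDerivAt F (f x) x)
    (hF : ∀ x ∈ Set.Ioi (0:ℝ), 0 < F x ∧ F x < 1)
    (hF0 : Filter.Tendsto F (nhdsWithin (0:ℝ) (Set.Ioi 0)) (nhds 0)) :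
    ∀ x ∈ Set.Ioi (0:ℝ),
      IntervalIntegrable (fun t => genRAI F f α t / t) MeasureTheory.volume 0 x ∧
      F x = (1 - Real.exp (-∫ t in (0:ℝ)..x, genRAI F f α t / t)) ^ (1/α) := by
  intro x hx
  have hFα_lt : ∀ t ∈ Ioi (0:ℝ), F t ^ α < 1 := fun t ht =>
    rpow_lt_one (hF t ht).1.le (hF t ht).2 hα
  have hderiv : ∀ t ∈ Ioc 0 x,
      HasDerivAt (fun s => -log (1 - F s ^ α)) (genRAI F f α t / t) t := fun t ht => by
    rw [genRAI_div_self hα.ne' ht.1.ne']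
    exact (hd t ht.1).neg_log_one_sub_rpow (hF t ht.1).1 (hFα_lt t ht.1).ne
  have hpos : ∀ t ∈ Ioo 0 x, 0 ≤ genRAI F f α t / t := fun t ht => by
    have hf : 0 ≤ f t := (hd t ht.1).nonneg_of_monotone hmono
    have hFt := (hF t ht.1).1
    have hsub : 0 < 1 - F t ^ α := sub_pos.2 (hFα_lt t ht.1)
    rw [genRAI_div_self hα.ne' ht.1.ne']
    positivity
  obtain ⟨hint, hval⟩ := intervalIntegral.integral_eq_sub_of_hasDerivAt_of_nonneg_of_tendsto
    hx hderiv hpos (tendsto_neg_log_one_sub_rpow hα hF0)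
  refine ⟨hint, ?_⟩
  rw [hval, sub_zero, neg_neg, exp_log (sub_pos.2 (hFα_lt x hx)), sub_sub_cancel, one_div,
    rpow_rpow_inv (hF x hx).1.le hα.ne']

/-- For `α > 0`, the cdf `F` of a non-negative absolutely continuous random variable
is recovered from its α-generalized reversed aging intensity: for every `x > 0` the
integral `∫_0^x L̆_α(t)/t dt` is finite and
`F(x) = [1 - exp(-∫_0^x L̆_α(t)/t dt)]^(1/α)`. -/
theorem stmt_6 (α : ℝ) (hα : 0 < α) (F f : ℝ → ℝ)
    (hmono : Monotone F)
    (hd : ∀ x ∈ Set.Ioi (0:ℝ), HasDerivAt F (f x) x)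
    (hF : ∀ x ∈ Set.Ioi (0:ℝ), 0 < F x ∧ F x < 1)
    (hfi : ∀ u v : ℝ, 0 < u → 0 < v → IntervalIntegrable f MeasureTheory.volume u v)
    (hF0 : Filter.Tendsto F (nhdsWithin (0:ℝ) (Set.Ioi 0)) (nhds 0)) :
    ∀ x ∈ Set.Ioi (0:ℝ),
      IntervalIntegrable (fun t => genRAI F f α t / t) MeasureTheory.volume 0 x ∧
      F x = (1 - Real.exp (-∫ t in (0:ℝ)..x, genRAI F f α t / t)) ^ (1/α) :=
  stmt_6_general α hα F f hmono hd hF hF0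
end

section
/- Let α > 0 and let F₁ and F₂ be cumulative distribution functions of non-negative absolutely continuous random variables, each differentiable on (0, +∞) with derivatives f₁ and f₂ respectively, each satisfying 0 < F_i(x) < 1 for all x > 0 and lim_{x→0⁺} F_i(x) = 0. If the α-generalized reversed aging intensity functions of F₁ and F₂ coincide, i.e., α x F₁(x)^{α−1} f₁(x)/(1 − F₁(x)^α) = α x F₂(x)^{α−1} f₂(x)/(1 − F₂(x)^α) for all x > 0, then F₁(x) = F₂(x) for all x > 0. -/
/-!
Write `G(x) = 1 - F(x)^α`. The α-generalized reversed aging intensity is `-x (log G)'(x)`, so two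
distributions with the same intensity have `log G₁` and `log G₂` with equal derivatives on
`(0, ∞)`. Both tend to `log 1 = 0` at `0⁺`, hence they coincide, and `t ↦ log (1 - t^α)` is
injective on `[0, 1)`.
-/

open Set Filter Topology Real

theorem eqOn_Ioi_of_hasDerivAt_of_tendsto_nhdsGT {E : Type*} [NormedAddCommGroup E]
    [NormedSpace ℝ E] {f g : ℝ → E} {f' : ℝ → E} {a : ℝ} {c : E}
    (hf : ∀ x ∈ Ioi a, HasDerivAt f (f' x) x) (hg : ∀ x ∈ Ioi a, HasDerivAt g (f' x) x)
    (hfa : Tendsto f (𝓝[>] a) (𝓝 c)) (hga : Tendsto g (𝓝[>] a) (𝓝 c)) :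
    EqOn f g (Ioi a) := by
  obtain ⟨b, hb⟩ := isOpen_Ioi.exists_eq_add_of_deriv_eq isPreconnected_Ioi
    (fun x hx => (hf x hx).differentiableAt.differentiableWithinAt)
    (fun x hx => (hg x hx).differentiableAt.differentiableWithinAt)
    (fun x hx => (hf x hx).deriv.trans (hg x hx).deriv.symm)
  have hfa' : Tendsto f (𝓝[>] a) (𝓝 (c + b)) :=
    (hga.add_const b).congr' (eventuallyEq_nhdsWithin_of_eqOn hb).symm
  have hb0 : b = 0 := by simpa using tendsto_nhds_unique hfa hfa'
  simpa [hb0] using hb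

theorem hasDerivAt_log_one_sub_rpow {F : ℝ → ℝ} {f α x : ℝ} (hF : HasDerivAt F f x)
    (hpos : 0 < F x) (hne : F x ^ α ≠ 1) :
    HasDerivAt (fun y => log (1 - F y ^ α)) (-(α * F x ^ (α - 1) * f / (1 - F x ^ α))) x := by
  convert ((hF.rpow_const (Or.inl hpos.ne')).const_sub 1).log (sub_ne_zero.2 hne.symm) using 1
  ring

theorem tendsto_log_one_sub_rpow {ι : Type*} {l : Filter ι} {F : ι → ℝ} {α : ℝ} (hα : 0 < α)
    (hF : Tendsto F l (𝓝 0)) : Tendsto (fun y => log (1 - F y ^ α)) l (𝓝 0) := by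
  have hpow : Tendsto (fun y => F y ^ α) l (𝓝 0) := by
    simpa [Function.comp_def, zero_rpow hα.ne'] using
      (continuousAt_rpow_const 0 α (Or.inr hα.le)).tendsto.comp hF
  have hsub : Tendsto (fun y => 1 - F y ^ α) l (𝓝 1) := by simpa using hpow.const_sub 1
  simpa [Function.comp_def] using (continuousAt_log one_ne_zero).tendsto.comp hsub

theorem injOn_log_one_sub_rpow {α : ℝ} (hα : 0 < α) :
    InjOn (fun t : ℝ => log (1 - t ^ α)) (Ico 0 1) := by
  intro s hs t ht hst
  have hpos : ∀ u ∈ Ico (0 : ℝ) 1, 0 < 1 - u ^ α := fun u hu =>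
    sub_pos.2 (rpow_lt_one hu.1 hu.2 hα)
  have hpow : s ^ α = t ^ α := by
    linarith [log_injOn_pos (hpos s hs) (hpos t ht) hst]
  exact rpow_left_injOn hα.ne' hs.1 ht.1 hpow

theorem stmt_8_general (α : ℝ) (hα : 0 < α) (F₁ f₁ F₂ f₂ : ℝ → ℝ)
    (hd₁ : ∀ x ∈ Set.Ioi (0:ℝ), HasDerivAt F₁ (f₁ x) x)
    (hd₂ : ∀ x ∈ Set.Ioi (0:ℝ), HasDerivAt F₂ (f₂ x) x)
    (hF₁ : ∀ x ∈ Set.Ioi (0:ℝ), 0 < F₁ x ∧ F₁ x < 1)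
    (hF₂ : ∀ x ∈ Set.Ioi (0:ℝ), 0 < F₂ x ∧ F₂ x < 1)
    (h0₁ : Filter.Tendsto F₁ (nhdsWithin (0:ℝ) (Set.Ioi 0)) (nhds 0))
    (h0₂ : Filter.Tendsto F₂ (nhdsWithin (0:ℝ) (Set.Ioi 0)) (nhds 0))
    (heq : ∀ x > (0:ℝ),
      α * x * F₁ x ^ (α - 1) * f₁ x / (1 - F₁ x ^ α) =
      α * x * F₂ x ^ (α - 1) * f₂ x / (1 - F₂ x ^ α)) :
    ∀ x > (0:ℝ), F₁ x = F₂ x := by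
  have hrate : ∀ x ∈ Ioi (0:ℝ), α * F₁ x ^ (α - 1) * f₁ x / (1 - F₁ x ^ α) =
      α * F₂ x ^ (α - 1) * f₂ x / (1 - F₂ x ^ α) := fun x hx =>
    mul_left_cancel₀ (ne_of_gt hx) (by linear_combination heq x hx)
  have hlog : EqOn (fun y => log (1 - F₁ y ^ α)) (fun y => log (1 - F₂ y ^ α)) (Ioi 0) := by
    refine eqOn_Ioi_of_hasDerivAt_of_tendsto_nhdsGT
      (f' := fun x => -(α * F₁ x ^ (α - 1) * f₁ x / (1 - F₁ x ^ α)))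
      (fun x hx => ?_) (fun x hx => ?_)
      (tendsto_log_one_sub_rpow hα h0₁) (tendsto_log_one_sub_rpow hα h0₂)
    · exact hasDerivAt_log_one_sub_rpow (hd₁ x hx) (hF₁ x hx).1
        (rpow_lt_one (hF₁ x hx).1.le (hF₁ x hx).2 hα).ne
    · rw [hrate x hx]
      exact hasDerivAt_log_one_sub_rpow (hd₂ x hx) (hF₂ x hx).1
        (rpow_lt_one (hF₂ x hx).1.le (hF₂ x hx).2 hα).ne
  intro x hx
  exact injOn_log_one_sub_rpow hα (Ioo_subset_Ico_self (hF₁ x hx))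
    (Ioo_subset_Ico_self (hF₂ x hx)) (hlog hx)

/-- For `α > 0`, the α-generalized reversed aging intensity function characterizes the
distribution uniquely: if two cdfs `F₁`, `F₂` of non-negative absolutely continuous
random variables have the same α-generalized reversed aging intensity on `(0,∞)`,
then `F₁ = F₂` on `(0,∞)`. -/
theorem stmt_8 (α : ℝ) (hα : 0 < α) (F₁ f₁ F₂ f₂ : ℝ → ℝ)
    (hm₁ : Monotone F₁) (hm₂ : Monotone F₂)
    (hd₁ : ∀ x ∈ Set.Ioi (0:ℝ), HasDerivAt F₁ (f₁ x) x)
    (hd₂ : ∀ x ∈ Set.Ioi (0:ℝ), HasDerivAt F₂ (f₂ x) x)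
    (hF₁ : ∀ x ∈ Set.Ioi (0:ℝ), 0 < F₁ x ∧ F₁ x < 1)
    (hF₂ : ∀ x ∈ Set.Ioi (0:ℝ), 0 < F₂ x ∧ F₂ x < 1)
    (hfi₁ : ∀ u v : ℝ, 0 < u → 0 < v → IntervalIntegrable f₁ MeasureTheory.volume u v)
    (hfi₂ : ∀ u v : ℝ, 0 < u → 0 < v → IntervalIntegrable f₂ MeasureTheory.volume u v)
    (h0₁ : Filter.Tendsto F₁ (nhdsWithin (0:ℝ) (Set.Ioi 0)) (nhds 0))
    (h0₂ : Filter.Tendsto F₂ (nhdsWithin (0:ℝ) (Set.Ioi 0)) (nhds 0))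
    (heq : ∀ x > (0:ℝ),
      α * x * F₁ x ^ (α - 1) * f₁ x / (1 - F₁ x ^ α) =
      α * x * F₂ x ^ (α - 1) * f₂ x / (1 - F₂ x ^ α)) :
    ∀ x > (0:ℝ), F₁ x = F₂ x :=
  stmt_8_general α hα F₁ f₁ F₂ f₂ hd₁ hd₂ hF₁ hF₂ h0₁ h0₂ heq
end

section
/- Let α < 0 and β, λ > 0, and let X be a non-negative absolutely continuous random variable with cumulative distribution function F, differentiable on (0, +∞) with derivative f, satisfying 0 < F(x) < 1 for all x > 0. If the α-generalized reversed aging intensity function of X equals L̆_α(x) = (αβλ/x^β) · exp(−λα/x^β)/(1 − exp(−λα/x^β)) for every x ∈ (0, +∞), then there exists γ ∈ (0, +∞) such that F(x) = [1 − γα(exp(−λα/x^β) − 1)]^{1/α} for all x ∈ (0, +∞). -/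
/-!
Put `G = 1 - F ^ α` and `H x = exp (-λα / x ^ β) - 1`. Clearing denominators, the prescribed
reversed aging intensity says exactly that the Wronskian `G' H - G H'` vanishes on `(0, ∞)`.
Since `H > 0` there, `G / H` is constant, i.e. `1 - F ^ α = κ H` with `κ = G 1 / H 1 < 0`,
and `γ = κ / α > 0` works.
-/

open Real Set

theorem eq_div_mul_of_hasDerivAt_of_mul_eq {s : Set ℝ} (hs : IsOpen s) (hs' : IsPreconnected s)
    {g h g' h' : ℝ → ℝ} (hg : ∀ x ∈ s, HasDerivAt g (g' x) x)
    (hh : ∀ x ∈ s, HasDerivAt h (h' x) x) (hh0 : ∀ x ∈ s, h x ≠ 0)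
    (hgh : ∀ x ∈ s, g' x * h x = g x * h' x) {a x : ℝ} (ha : a ∈ s) (hx : x ∈ s) :
    g x = g a / h a * h x := by
  have hquot : ∀ y ∈ s, HasDerivAt (fun y => g y / h y) 0 y := fun y hy => by
    have := (hg y hy).div (hh y hy) (hh0 y hy)
    rwa [hgh y hy, sub_self, zero_div] at this
  have hconst : g x / h x = g a / h a :=
    hs.is_const_of_deriv_eq_zero hs'
      (fun y hy => (hquot y hy).differentiableAt.differentiableWithinAt)
      (fun y hy => (hquot y hy).deriv) hx ha
  rw [← hconst, div_mul_cancel₀ _ (hh0 x hx)]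

theorem hasDerivAt_exp_div_rpow (c β : ℝ) {x : ℝ} (hx : 0 < x) :
    HasDerivAt (fun y => exp (c / y ^ β)) (-(c * β) / (x * x ^ β) * exp (c / x ^ β)) x := by
  have hpow := (hasDerivAt_rpow_const (p := β) (Or.inl hx.ne')).inv (rpow_pos_of_pos hx β).ne'
  convert (hpow.const_mul c).exp using 1
  · ext y; simp only [Pi.inv_apply, div_eq_mul_inv]
  · simp only [Pi.inv_apply]
    rw [rpow_sub_one hx.ne']; field_simp

theorem wronskian_eq_zero_of_genRAI_eq {F f : ℝ → ℝ} {α β lam x : ℝ} (hα : α ≠ 0)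
    (hx : 0 < x) (hFα : 1 - F x ^ α ≠ 0) (he : exp (-(lam * α) / x ^ β) - 1 ≠ 0)
    (hL : genRAI F f α x =
      α * β * lam / x ^ β * (exp (-(lam * α) / x ^ β) / (1 - exp (-(lam * α) / x ^ β)))) :
    -(f x * α * F x ^ (α - 1)) * (exp (-(lam * α) / x ^ β) - 1) =
      (1 - F x ^ α) * (-(-(lam * α) * β) / (x * x ^ β) * exp (-(lam * α) / x ^ β)) := by
  rw [genRAI, if_neg hα] at hL
  set e := exp (-(lam * α) / x ^ β)
  have he' : 1 - e ≠ 0 := by rwa [← neg_sub, neg_ne_zero]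
  have hxβ : x ^ β ≠ 0 := (rpow_pos_of_pos hx β).ne'
  field_simp at hL ⊢
  linear_combination hL

theorem stmt_10_general (α β lam : ℝ) (hα : α < 0) (hlam : 0 < lam)
    (F f : ℝ → ℝ)
    (hd : ∀ x ∈ Set.Ioi (0:ℝ), HasDerivAt F (f x) x)
    (hF : ∀ x ∈ Set.Ioi (0:ℝ), 0 < F x ∧ F x < 1)
    (hL : ∀ x > (0:ℝ), genRAI F f α x =
      α * β * lam / x ^ β *
        (Real.exp (-(lam * α) / x ^ β) / (1 - Real.exp (-(lam * α) / x ^ β)))) :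
    ∃ γ > (0:ℝ), ∀ x > (0:ℝ),
      F x = (1 - γ * α * (Real.exp (-(lam * α) / x ^ β) - 1)) ^ (1/α) := by
  set c := -(lam * α)
  have hc : 0 < c := neg_pos.2 (mul_neg_of_pos_of_neg hlam hα)
  set G : ℝ → ℝ := fun x => 1 - F x ^ α
  set H : ℝ → ℝ := fun x => exp (c / x ^ β) - 1
  have hG : ∀ x ∈ Ioi (0:ℝ), G x < 0 := fun x hx =>
    sub_neg.2 (one_lt_rpow_of_pos_of_lt_one_of_neg (hF x hx).1 (hF x hx).2 hα)
  have hH : ∀ x ∈ Ioi (0:ℝ), 0 < H x := fun x hx =>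
    sub_pos.2 (one_lt_exp_iff.2 (div_pos hc (rpow_pos_of_pos hx β)))
  have h1 : (1 : ℝ) ∈ Ioi 0 := mem_Ioi.2 one_pos
  have hGH : ∀ x ∈ Ioi (0:ℝ), G x = G 1 / H 1 * H x := fun x hx =>
    eq_div_mul_of_hasDerivAt_of_mul_eq isOpen_Ioi isPreconnected_Ioi
      (fun y hy => ((hd y hy).rpow_const (Or.inl (hF y hy).1.ne')).const_sub 1)
      (fun y hy => (hasDerivAt_exp_div_rpow c β hy).sub_const 1) (fun y hy => (hH y hy).ne')
      (fun y hy => wronskian_eq_zero_of_genRAI_eq hα.ne hy (hG y hy).ne (hH y hy).ne' (hL y hy))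
      h1 hx
  refine ⟨G 1 / H 1 / α, div_pos_of_neg_of_neg (div_neg_of_neg_of_pos (hG 1 h1) (hH 1 h1)) hα,
    fun x hx => ?_⟩
  have hFα : F x ^ α = 1 - G 1 / H 1 / α * α * H x := by
    rw [div_mul_cancel₀ _ hα.ne, ← hGH x hx]; ring
  rw [← hFα, one_div, rpow_rpow_inv (hF x hx).1.le hα.ne]

/-- For `α < 0` and `β, λ > 0`: if the α-generalized reversed aging intensity of `X`
is `L̆_α(x) = (αβλ/x^β) · exp(-λα/x^β)/(1 - exp(-λα/x^β))` on `(0,∞)`, then there is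
`γ > 0` with `F(x) = [1 - γα(exp(-λα/x^β) - 1)]^(1/α)` for all `x > 0`. -/
theorem stmt_10 (α β lam : ℝ) (hα : α < 0) (hβ : 0 < β) (hlam : 0 < lam)
    (F f : ℝ → ℝ)
    (hmono : Monotone F)
    (hd : ∀ x ∈ Set.Ioi (0:ℝ), HasDerivAt F (f x) x)
    (hF : ∀ x ∈ Set.Ioi (0:ℝ), 0 < F x ∧ F x < 1)
    (hfi : ∀ u v : ℝ, 0 < u → 0 < v → IntervalIntegrable f MeasureTheory.volume u v)
    (hL : ∀ x > (0:ℝ), genRAI F f α x =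
      α * β * lam / x ^ β *
        (Real.exp (-(lam * α) / x ^ β) / (1 - Real.exp (-(lam * α) / x ^ β)))) :
    ∃ γ > (0:ℝ), ∀ x > (0:ℝ),
      F x = (1 - γ * α * (Real.exp (-(lam * α) / x ^ β) - 1)) ^ (1/α) :=
  stmt_10_general α β lam hα hlam F f hd hF hL
end

section
/- Let X follow an inverse two-parameter Weibull distribution invW2(β, λ) with β, λ > 0, so that F(x) = exp(−λ/x^β) for x > 0. Then F is differentiable on (0, +∞) with derivative f(x) = (λβ/x^{β+1}) exp(−λ/x^β), and for every α ≠ 0 and every x > 0 the α-generalized reversed aging intensity function of X equals L̆_α(x) = (αβλ/x^β) · exp(−λα/x^β)/(1 − exp(−λα/x^β)). -/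
open Real

theorem hasDerivAt_neg_div_rpow (c β : ℝ) {x : ℝ} (hx : 0 < x) :
    HasDerivAt (fun y : ℝ => -c / y ^ β) (c * β / x ^ (β + 1)) x := by
  have hxβ : x ^ β ≠ 0 := (rpow_pos_of_pos hx β).ne'
  have hinv := ((hasDerivAt_rpow_const (p := β) (Or.inl hx.ne')).inv hxβ).const_mul (-c)
  have hsq : (x ^ β) ^ 2 = x ^ (β + 1) * x ^ (β - 1) := by
    rw [sq, ← rpow_add hx, ← rpow_add hx]
    ring_nf
  have hxβ₁ : x ^ (β + 1) ≠ 0 := (rpow_pos_of_pos hx _).ne'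
  have hxβ₂ : x ^ (β - 1) ≠ 0 := (rpow_pos_of_pos hx _).ne'
  have hfun : (fun y : ℝ => -c / y ^ β) = fun y => -c * (fun y : ℝ => y ^ β)⁻¹ y :=
    funext fun y => div_eq_mul_inv _ _
  rw [hfun]
  exact hinv.congr_deriv (by rw [hsq]; field_simp)

theorem hasDerivAt_exp_neg_div_rpow (c β : ℝ) {x : ℝ} (hx : 0 < x) :
    HasDerivAt (fun y : ℝ => exp (-c / y ^ β)) (c * β / x ^ (β + 1) * exp (-c / x ^ β)) x := by
  simpa only [mul_comm] using (hasDerivAt_neg_div_rpow c β hx).exp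

theorem genRAI_of_eq_exp {F f : ℝ → ℝ} {α x u v : ℝ} (hα : α ≠ 0)
    (hF : F x = exp u) (hf : f x = v * exp u) :
    genRAI F f α x = α * x * v * (exp (α * u) / (1 - exp (α * u))) := by
  have hpow : ∀ c : ℝ, exp u ^ c = exp (c * u) := fun c => by rw [← exp_mul, mul_comm]
  have hnum : exp ((α - 1) * u) * exp u = exp (α * u) := by
    rw [← exp_add]
    ring_nf
  rw [genRAI, if_neg hα, hF, hf, hpow, hpow, ← hnum]
  ring

theorem stmt_12_general (β lam : ℝ) (F f : ℝ → ℝ)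
    (hF : ∀ x > (0:ℝ), F x = Real.exp (-lam / x ^ β))
    (hf : ∀ x > (0:ℝ), f x = lam * β / x ^ (β + 1) * Real.exp (-lam / x ^ β)) :
    (∀ x > (0:ℝ), HasDerivAt F (f x) x) ∧
    ∀ α : ℝ, α ≠ 0 → ∀ x > (0:ℝ), genRAI F f α x =
      α * β * lam / x ^ β *
        (Real.exp (-(lam * α) / x ^ β) / (1 - Real.exp (-(lam * α) / x ^ β))) := by
  refine ⟨fun x hx => ?_, fun α hα x hx => ?_⟩
  · have hF_nhds : F =ᶠ[nhds x] fun y => exp (-lam / y ^ β) :=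
      Filter.eventually_of_mem (Ioi_mem_nhds hx) hF
    rw [hf x hx]
    exact (hasDerivAt_exp_neg_div_rpow lam β hx).congr_of_eventuallyEq hF_nhds
  · have hxβ : x ^ (β + 1) = x ^ β * x := by rw [rpow_add hx, rpow_one]
    have hexponent : α * (-lam / x ^ β) = -(lam * α) / x ^ β := by ring
    rw [genRAI_of_eq_exp hα (hF x hx) (hf x hx), hexponent, hxβ]
    field_simp

/-- If `X ∼ invW2(β, λ)`, i.e. `F(x) = exp(-λ/x^β)` for `x > 0` with `β, λ > 0`, then
`F` is differentiable on `(0,∞)` with derivative `f(x) = (λβ/x^(β+1)) exp(-λ/x^β)`,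
and for every `α ≠ 0` and `x > 0` its α-generalized reversed aging intensity equals
`L̆_α(x) = (αβλ/x^β) · exp(-λα/x^β)/(1 - exp(-λα/x^β))`. -/
theorem stmt_12 (β lam : ℝ) (hβ : 0 < β) (hlam : 0 < lam) (F f : ℝ → ℝ)
    (hF : ∀ x > (0:ℝ), F x = Real.exp (-lam / x ^ β))
    (hf : ∀ x > (0:ℝ), f x = lam * β / x ^ (β + 1) * Real.exp (-lam / x ^ β)) :
    (∀ x > (0:ℝ), HasDerivAt F (f x) x) ∧
    ∀ α : ℝ, α ≠ 0 → ∀ x > (0:ℝ), genRAI F f α x =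
      α * β * lam / x ^ β *
        (Real.exp (-(lam * α) / x ^ β) / (1 - Real.exp (-(lam * α) / x ^ β))) :=
  stmt_12_general β lam F f hF hf
end

section
/- Let α < 0, A > 0 and k > 0, and define F(x) = [1 + k x^{−A}]^{1/α} for x ∈ (0, +∞). Then F is the cumulative distribution function of a positive absolutely continuous random variable (it is continuous, nondecreasing, with lim_{x→0⁺} F(x) = 0 and lim_{x→+∞} F(x) = 1), F is differentiable on (0, +∞) with derivative f, and its α-generalized reversed aging intensity function is constant: L̆_α(x) = A for all x > 0. -/
/-- The cdf `F(x) = [1 + k x^(-A)]^(1/α)` arising from the constant reversed aging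
intensity `L̆_α ≡ A` for `α < 0`. -/
noncomputable def Fconst (α A k : ℝ) (x : ℝ) : ℝ :=
  (1 + k * x ^ (-A)) ^ (1/α)

open Filter Set Topology

noncomputable def fconst (α A k : ℝ) (x : ℝ) : ℝ :=
  -(A * k / α) * x ^ (-A - 1) * (1 + k * x ^ (-A)) ^ (1 / α - 1)

section

variable {α A k x : ℝ}

lemma one_le_one_add_mul_rpow (hk : 0 ≤ k) (hx : 0 < x) : 1 ≤ 1 + k * x ^ (-A) := by
  have := mul_nonneg hk (Real.rpow_pos_of_pos hx (-A)).le
  linarith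

lemma Fconst_hasDerivAt (hk : 0 ≤ k) (hx : 0 < x) :
    HasDerivAt (Fconst α A k) (fconst α A k x) x := by
  have hbase : HasDerivAt (fun y : ℝ => 1 + k * y ^ (-A)) (k * (-A * x ^ (-A - 1))) x :=
    ((Real.hasDerivAt_rpow_const (Or.inl hx.ne')).const_mul k).const_add 1
  have hpos : 0 < 1 + k * x ^ (-A) := by linarith [one_le_one_add_mul_rpow (A := A) hk hx]
  refine (hbase.rpow_const (p := 1 / α) (Or.inl hpos.ne')).congr_deriv ?_
  rw [fconst]
  ring

lemma Fconst_monotoneOn (hα : α < 0) (hA : 0 ≤ A) (hk : 0 ≤ k) :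
    MonotoneOn (Fconst α A k) (Ioi 0) := by
  intro x hx y hy hxy
  have hpow : y ^ (-A) ≤ x ^ (-A) := Real.rpow_le_rpow_of_nonpos hx hxy (by linarith)
  have hbase : 1 + k * y ^ (-A) ≤ 1 + k * x ^ (-A) := by gcongr
  exact Real.rpow_le_rpow_of_nonpos (by linarith [one_le_one_add_mul_rpow (A := A) hk hy])
    hbase (one_div_neg.mpr hα).le

lemma Fconst_tendsto_nhdsGT_zero (hα : α < 0) (hA : 0 < A) (hk : 0 < k) :
    Tendsto (Fconst α A k) (𝓝[>] 0) (𝓝 0) := by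
  have hpow : Tendsto (fun x : ℝ => x ^ (-A)) (𝓝[>] 0) atTop := by
    refine ((tendsto_rpow_atTop hA).comp tendsto_inv_nhdsGT_zero).congr' ?_
    filter_upwards [self_mem_nhdsWithin] with x hx
    rw [Function.comp_apply, Real.inv_rpow hx.le, Real.rpow_neg hx.le]
  have hbase : Tendsto (fun x : ℝ => 1 + k * x ^ (-A)) (𝓝[>] 0) atTop :=
    tendsto_atTop_add_const_left _ 1 (hpow.const_mul_atTop hk)
  have hout : Tendsto (fun y : ℝ => y ^ (1 / α)) atTop (𝓝 0) := by
    simpa using tendsto_rpow_neg_atTop (neg_pos.mpr (one_div_neg.mpr hα))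
  exact hout.comp hbase

lemma Fconst_tendsto_atTop (hA : 0 < A) : Tendsto (Fconst α A k) atTop (𝓝 1) := by
  have hbase : Tendsto (fun x : ℝ => 1 + k * x ^ (-A)) atTop (𝓝 1) := by
    simpa using ((tendsto_rpow_neg_atTop hA).const_mul k).const_add 1
  have h := (Real.continuousAt_rpow_const 1 (1 / α) (Or.inl one_ne_zero)).tendsto.comp hbase
  rwa [Real.one_rpow] at h

lemma genRAI_Fconst (hα : α ≠ 0) (hk : 0 < k) (hx : 0 < x) :
    genRAI (Fconst α A k) (fconst α A k) α x = A := by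
  have hg : 0 < 1 + k * x ^ (-A) := by linarith [one_le_one_add_mul_rpow (A := A) hk.le hx]
  have hFα : Fconst α A k x ^ α = 1 + k * x ^ (-A) := by
    rw [Fconst, ← Real.rpow_mul hg.le, one_div_mul_cancel hα, Real.rpow_one]
  have hcancel : Fconst α A k x ^ (α - 1) * (1 + k * x ^ (-A)) ^ (1 / α - 1) = 1 := by
    rw [Fconst, ← Real.rpow_mul hg.le, ← Real.rpow_add hg]
    convert Real.rpow_zero _ using 2
    field_simp
    ring
  have hxpow : x * x ^ (-A - 1) = x ^ (-A) := by
    rw [Real.rpow_sub_one hx.ne']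
    field_simp
  have hpos : 0 < x ^ (-A) := Real.rpow_pos_of_pos hx _
  rw [genRAI, if_neg hα, hFα, fconst]
  calc _ = A * (x * x ^ (-A - 1) / x ^ (-A)) *
        (Fconst α A k x ^ (α - 1) * (1 + k * x ^ (-A)) ^ (1 / α - 1)) := by
        field_simp
        ring
    _ = A := by rw [hcancel, hxpow, div_self hpos.ne', mul_one, mul_one]

end

/-- For `α < 0`, `A > 0` and `k > 0`, `F(x) = [1 + k x^(-A)]^(1/α)` is the cdf of a
positive absolutely continuous random variable (continuous, nondecreasing on `(0,∞)`,
with limits `0` at `0⁺` and `1` at `+∞`), it is differentiable on `(0,∞)` with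
derivative `f`, and its α-generalized reversed aging intensity is constant:
`L̆_α(x) = A` for all `x > 0`. -/
theorem stmt_13 (α A k : ℝ) (hα : α < 0) (hA : 0 < A) (hk : 0 < k) :
    ContinuousOn (Fconst α A k) (Set.Ioi 0) ∧
    MonotoneOn (Fconst α A k) (Set.Ioi 0) ∧
    Filter.Tendsto (Fconst α A k) (nhdsWithin (0:ℝ) (Set.Ioi 0)) (nhds 0) ∧
    Filter.Tendsto (Fconst α A k) Filter.atTop (nhds 1) ∧
    ∃ f : ℝ → ℝ, (∀ x > (0:ℝ), HasDerivAt (Fconst α A k) (f x) x) ∧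
      ∀ x > (0:ℝ), genRAI (Fconst α A k) f α x = A :=
  ⟨fun _ hx => (Fconst_hasDerivAt hk.le hx).continuousAt.continuousWithinAt,
    Fconst_monotoneOn hα hA.le hk.le,
    Fconst_tendsto_nhdsGT_zero hα hA hk,
    Fconst_tendsto_atTop hA,
    fconst α A k, fun _ hx => Fconst_hasDerivAt hk.le hx,
    fun _ hx => genRAI_Fconst hα.ne hk hx⟩
end

section
/- Let α < 0, A > 0, B > 0 and k > 0, and define F(x) = [1 + k x^{−A} exp(−Bx)]^{1/α} for x ∈ (0, +∞). Then F is the cumulative distribution function of a positive absolutely continuous random variable (it is continuous, nondecreasing, with lim_{x→0⁺} F(x) = 0 and lim_{x→+∞} F(x) = 1), F is differentiable on (0, +∞) with derivative f, and its α-generalized reversed aging intensity function is linear: L̆_α(x) = A + Bx for all x > 0. -/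
/-- The cdf `F(x) = [1 + k x^(-A) exp(-Bx)]^(1/α)` arising from the linear reversed
aging intensity `L̆_α(x) = A + Bx` for `α < 0`. -/
noncomputable def Flin (α A B k : ℝ) (x : ℝ) : ℝ :=
  (1 + k * x ^ (-A) * Real.exp (-(B * x))) ^ (1/α)

/-! Write `F = G ^ (1/α)` with `G x = 1 + k x^(-A) e^(-Bx)`. Then `F ^ α = G`, so
`α x F^(α-1) f = x G'`, and `G - 1` solves `u' = -(A/x + B) u`; hence
`L̆_α(x) = x G'(x) / (1 - G x) = A + Bx`. On `(0, ∞)`, `G` decreases from `+∞` to `1` and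
`t ↦ t ^ (1/α)` is decreasing because `1/α < 0`, which gives monotonicity and both limits of `F`. -/

open Filter Set Topology Real

theorem genRAI_rpow_one_div {α x : ℝ} (G G' : ℝ → ℝ) (hα : α ≠ 0) (hG : 0 < G x) :
    genRAI (fun y => G y ^ (1 / α)) (fun y => G' y * (1 / α) * G y ^ (1 / α - 1)) α x =
      x * G' x / (1 - G x) := by
  have hpow : (G x ^ (1 / α)) ^ (α - 1) * G x ^ (1 / α - 1) = 1 := by
    rw [← rpow_mul hG.le, ← rpow_add hG]
    have : 1 / α * (α - 1) + (1 / α - 1) = 0 := by field_simp; ring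
    rw [this, rpow_zero]
  have hα_pow : (G x ^ (1 / α)) ^ α = G x := by
    rw [one_div, rpow_inv_rpow hG.le hα]
  simp only [genRAI, if_neg hα, hα_pow]
  congr 1
  calc α * x * (G x ^ (1 / α)) ^ (α - 1) * (G' x * (1 / α) * G x ^ (1 / α - 1))
      = x * G' x * (α * (1 / α)) * ((G x ^ (1 / α)) ^ (α - 1) * G x ^ (1 / α - 1)) := by ring
    _ = x * G' x := by rw [hpow, mul_one_div_cancel hα, mul_one, mul_one]

namespace Flin

noncomputable def base (A B k x : ℝ) : ℝ :=
  1 + k * x ^ (-A) * exp (-(B * x))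

variable {A B k x : ℝ}

theorem eq_base_rpow (α : ℝ) : Flin α A B k = fun x => base A B k x ^ (1 / α) := rfl

theorem one_lt_base (hk : 0 < k) (hx : 0 < x) : 1 < base A B k x := by
  have : 0 < k * x ^ (-A) * exp (-(B * x)) := by positivity
  unfold base
  linarith

theorem antitoneOn_base (hA : 0 ≤ A) (hB : 0 ≤ B) (hk : 0 ≤ k) :
    AntitoneOn (base A B k) (Ioi 0) := by
  intro x (hx : 0 < x) y _ hxy
  have hpow : y ^ (-A) ≤ x ^ (-A) := rpow_le_rpow_of_nonpos hx hxy (neg_nonpos.mpr hA)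
  have hexp : exp (-(B * y)) ≤ exp (-(B * x)) := by gcongr
  unfold base
  gcongr

theorem hasDerivAt_base (hx : 0 < x) :
    HasDerivAt (base A B k) (-(A / x + B) * (base A B k x - 1)) x := by
  have hpow : HasDerivAt (fun y => y ^ (-A)) (-A * x ^ (-A - 1)) x :=
    hasDerivAt_rpow_const (Or.inl hx.ne')
  have hexp : HasDerivAt (fun y => exp (-(B * y))) (exp (-(B * x)) * -B) x := by
    simpa using (((hasDerivAt_id x).const_mul B).neg).exp
  refine (((hpow.const_mul k).mul hexp).const_add 1).congr_deriv ?_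
  rw [rpow_sub_one hx.ne']
  unfold base
  field_simp
  ring

theorem tendsto_base_nhdsGT_zero (hA : 0 < A) (hk : 0 < k) :
    Tendsto (base A B k) (𝓝[>] 0) atTop := by
  have hexp : Tendsto (fun x => exp (-(B * x))) (𝓝[>] 0) (𝓝 1) := by
    have : Continuous fun x => exp (-(B * x)) := by fun_prop
    simpa using this.tendsto 0 |>.mono_left nhdsWithin_le_nhds
  refine tendsto_atTop_add_const_left _ 1 ?_
  exact ((tendsto_rpow_neg_nhdsGT_zero (neg_neg_of_pos hA)).const_mul_atTop hk).atTop_mul_pos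
    one_pos hexp

theorem tendsto_base_atTop (hA : 0 < A) (hB : 0 < B) :
    Tendsto (base A B k) atTop (𝓝 1) := by
  have hexp : Tendsto (fun x => exp (-(B * x))) atTop (𝓝 0) :=
    tendsto_exp_atBot.comp (tendsto_neg_atTop_atBot.comp (tendsto_id.const_mul_atTop hB))
  have := (((tendsto_rpow_neg_atTop hA).const_mul k).mul hexp).const_add 1
  simp only [mul_zero, add_zero] at this
  exact this

end Flin

/-- For `α < 0`, `A, B > 0` and `k > 0`, `F(x) = [1 + k x^(-A) exp(-Bx)]^(1/α)` is the
cdf of a positive absolutely continuous random variable (continuous, nondecreasing on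
`(0,∞)`, with limits `0` at `0⁺` and `1` at `+∞`), it is differentiable on `(0,∞)`
with derivative `f`, and its α-generalized reversed aging intensity is linear:
`L̆_α(x) = A + Bx` for all `x > 0`. -/
theorem stmt_14 (α A B k : ℝ) (hα : α < 0) (hA : 0 < A) (hB : 0 < B) (hk : 0 < k) :
    ContinuousOn (Flin α A B k) (Set.Ioi 0) ∧
    MonotoneOn (Flin α A B k) (Set.Ioi 0) ∧
    Filter.Tendsto (Flin α A B k) (nhdsWithin (0:ℝ) (Set.Ioi 0)) (nhds 0) ∧
    Filter.Tendsto (Flin α A B k) Filter.atTop (nhds 1) ∧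
    ∃ f : ℝ → ℝ, (∀ x > (0:ℝ), HasDerivAt (Flin α A B k) (f x) x) ∧
      ∀ x > (0:ℝ), genRAI (Flin α A B k) f α x = A + B * x := by
  set G := Flin.base A B k
  have hGpos (x : ℝ) (hx : 0 < x) : 0 < G x := one_pos.trans (Flin.one_lt_base hk hx)
  set G' := fun x => -(A / x + B) * (G x - 1)
  have hderiv (x : ℝ) (hx : 0 < x) :
      HasDerivAt (Flin α A B k) (G' x * (1 / α) * G x ^ (1 / α - 1)) x :=
    (Flin.hasDerivAt_base hx).rpow_const (Or.inl (hGpos x hx).ne')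
  have hexp_neg : 1 / α < 0 := one_div_neg.mpr hα
  refine ⟨fun x hx => (hderiv x hx).continuousAt.continuousWithinAt, ?_, ?_, ?_,
    ⟨_, hderiv, fun x hx => ?_⟩⟩
  · intro x hx y hy hxy
    exact rpow_le_rpow_of_nonpos (hGpos y hy) (Flin.antitoneOn_base hA.le hB.le hk.le hx hy hxy)
      hexp_neg.le
  · have hrpow := tendsto_rpow_neg_atTop (neg_pos.mpr hexp_neg)
    rw [neg_neg] at hrpow
    exact hrpow.comp (Flin.tendsto_base_nhdsGT_zero hA hk)
  · have hrpow := (continuousAt_rpow_const 1 (1 / α) (Or.inl one_ne_zero)).tendsto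
    rw [one_rpow] at hrpow
    exact hrpow.comp (Flin.tendsto_base_atTop hA hB)
  · rw [Flin.eq_base_rpow, genRAI_rpow_one_div G G' hα.ne (hGpos x hx)]
    have : 1 - G x ≠ 0 := (sub_neg.mpr (Flin.one_lt_base hk hx)).ne
    simp only [G']
    field_simp
    ring
end

section
/- Let α > 0 and B > 0, and define F(x) = [1 − exp(−Bx)]^{1/α} for x ∈ (0, +∞) (an exponentiated exponential distribution). Then F is the cumulative distribution function of a positive absolutely continuous random variable (continuous, nondecreasing, with lim_{x→0⁺} F(x) = 0 and lim_{x→+∞} F(x) = 1), F is differentiable on (0, +∞) with derivative f, and its α-generalized reversed aging intensity function is L̆_α(x) = Bx for all x > 0. Moreover, F is the unique such cumulative distribution function with α-generalized reversed aging intensity equal to Bx. -/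
/-- The exponentiated exponential cdf `F(x) = [1 - exp(-Bx)]^(1/α)`. -/
noncomputable def Fee (α B : ℝ) (x : ℝ) : ℝ :=
  (1 - Real.exp (-(B * x))) ^ (1/α)

open Real Set Filter Topology

noncomputable def feeDensity (α B x : ℝ) : ℝ :=
  B * exp (-(B * x)) * (1 / α) * (1 - exp (-(B * x))) ^ (1 / α - 1)

section Fee

variable {α B x : ℝ}

lemma one_sub_exp_neg_mul_pos (hB : 0 < B) (hx : 0 < x) : 0 < 1 - exp (-(B * x)) :=
  sub_pos.2 (exp_lt_one_iff.2 (neg_lt_zero.2 (mul_pos hB hx)))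

lemma hasDerivAt_one_sub_exp_neg_mul (B x : ℝ) :
    HasDerivAt (fun y => 1 - exp (-(B * y))) (B * exp (-(B * x))) x := by
  refine (((hasDerivAt_id' x).const_mul B).fun_neg.exp.const_sub 1).congr_deriv ?_
  ring

lemma hasDerivAt_Fee (hB : 0 < B) (hx : 0 < x) :
    HasDerivAt (Fee α B) (feeDensity α B x) x :=
  (hasDerivAt_one_sub_exp_neg_mul B x).rpow_const (Or.inl (one_sub_exp_neg_mul_pos hB hx).ne')

lemma feeDensity_pos (hα : 0 < α) (hB : 0 < B) (hx : 0 < x) : 0 < feeDensity α B x := by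
  have := rpow_pos_of_pos (one_sub_exp_neg_mul_pos hB hx) (1 / α - 1)
  unfold feeDensity
  positivity

lemma continuousOn_Fee (hB : 0 < B) : ContinuousOn (Fee α B) (Ioi 0) := fun _ hx =>
  (hasDerivAt_Fee hB hx).continuousAt.continuousWithinAt

lemma strictMonoOn_Fee (hα : 0 < α) (hB : 0 < B) : StrictMonoOn (Fee α B) (Ioi 0) :=
  strictMonoOn_of_hasDerivWithinAt_pos (convex_Ioi 0) (continuousOn_Fee hB)
    (fun _ hx => (hasDerivAt_Fee hB (interior_subset hx)).hasDerivWithinAt)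
    (fun _ hx => feeDensity_pos hα hB (interior_subset hx))

lemma Fee_rpow (hα : α ≠ 0) (hB : 0 < B) (hx : 0 < x) :
    Fee α B x ^ α = 1 - exp (-(B * x)) := by
  rw [Fee, ← rpow_mul (one_sub_exp_neg_mul_pos hB hx).le, one_div_mul_cancel hα, rpow_one]

lemma genRAI_Fee (hα : α ≠ 0) (hB : 0 < B) (hx : 0 < x) :
    genRAI (Fee α B) (feeDensity α B) α x = B * x := by
  set t := 1 - exp (-(B * x)) with ht_def
  have ht : 0 < t := one_sub_exp_neg_mul_pos hB hx
  have hpow : Fee α B x ^ (α - 1) * t ^ (1 / α - 1) = 1 := by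
    rw [Fee, ← rpow_mul ht.le, ← rpow_add ht,
      show 1 / α * (α - 1) + (1 / α - 1) = 0 by field_simp; ring, rpow_zero]
  have hsurv : 1 - Fee α B x ^ α = exp (-(B * x)) := by
    rw [Fee_rpow hα hB hx]; ring
  rw [genRAI, if_neg hα, hsurv, div_eq_iff (exp_pos _).ne']
  calc α * x * Fee α B x ^ (α - 1) * feeDensity α B x
      = (Fee α B x ^ (α - 1) * t ^ (1 / α - 1)) * (α * (1 / α)) * (B * x * exp (-(B * x))) := by
        simp only [feeDensity, ← ht_def]; ring
    _ = B * x * exp (-(B * x)) := by rw [hpow, mul_one_div_cancel hα, one_mul, one_mul]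

lemma tendsto_Fee_nhdsGT_zero (hα : 0 < α) : Tendsto (Fee α B) (𝓝[>] 0) (𝓝 0) := by
  have hcont : Continuous fun y => (1 - exp (-(B * y))) ^ (1 / α) :=
    (by fun_prop : Continuous fun y => 1 - exp (-(B * y))).rpow_const
      fun _ => Or.inr (by positivity)
  have h := hcont.tendsto 0
  simp only [mul_zero, neg_zero, exp_zero, sub_self, zero_rpow (one_div_pos.2 hα).ne'] at h
  exact h.mono_left nhdsWithin_le_nhds

lemma tendsto_Fee_atTop (hB : 0 < B) : Tendsto (Fee α B) atTop (𝓝 1) := by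
  have h : Tendsto (fun y => 1 - exp (-(B * y))) atTop (𝓝 1) := by
    simpa using (tendsto_exp_atBot.comp
      (tendsto_neg_atTop_atBot.comp (tendsto_id.const_mul_atTop hB))).const_sub 1
  have h' := (continuousAt_rpow_const 1 (1 / α) (Or.inl one_ne_zero)).tendsto.comp h
  rwa [one_rpow] at h'

end Fee

lemma eqOn_Ioi_of_hasDerivAt_zero {E : Type*} [NormedAddCommGroup E] [NormedSpace ℝ E]
    {H : ℝ → E} {a : ℝ} {c : E} (hH : ∀ x ∈ Ioi a, HasDerivAt H 0 x)
    (hlim : Tendsto H (𝓝[>] a) (𝓝 c)) : ∀ x ∈ Ioi a, H x = c := by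
  obtain ⟨d, hd⟩ := isOpen_Ioi.exists_is_const_of_deriv_eq_zero isPreconnected_Ioi
    (fun x hx => (hH x hx).differentiableAt.differentiableWithinAt)
    (fun x hx => (hH x hx).deriv)
  have hd_lim : Tendsto H (𝓝[>] a) (𝓝 d) :=
    tendsto_const_nhds.congr' (eventually_nhdsWithin_of_forall fun x hx => (hd x hx).symm)
  rwa [tendsto_nhds_unique hlim hd_lim]

section Uniqueness

variable {G g : ℝ → ℝ} {α B : ℝ}

lemma rpow_deriv_eq_of_genRAI_eq (hα : α ≠ 0) {x : ℝ} (hx : 0 < x) (hGx : G x ^ α ≠ 1)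
    (hRAI : genRAI G g α x = B * x) : α * G x ^ (α - 1) * g x = B * (1 - G x ^ α) := by
  rw [genRAI, if_neg hα, div_eq_iff (sub_ne_zero.2 hGx.symm)] at hRAI
  exact mul_left_cancel₀ hx.ne' (by linarith)

lemma eq_Fee_of_genRAI_eq (hα : 0 < α)
    (hGder : ∀ x ∈ Ioi (0 : ℝ), HasDerivAt G (g x) x)
    (hG01 : ∀ x ∈ Ioi (0 : ℝ), 0 < G x ∧ G x < 1)
    (hG0 : Tendsto G (𝓝[>] 0) (𝓝 0))
    (hRAI : ∀ x > (0 : ℝ), genRAI G g α x = B * x) :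
    ∀ x > (0 : ℝ), G x = Fee α B x := by
  have hΦ_deriv : ∀ x ∈ Ioi (0 : ℝ),
      HasDerivAt (fun y => (1 - G y ^ α) * exp (B * y)) 0 x := by
    intro x hx
    have hGα := (hGder x hx).rpow_const (p := α) (Or.inl (hG01 x hx).1.ne')
    have hkey := rpow_deriv_eq_of_genRAI_eq hα.ne' hx
      (rpow_lt_one (hG01 x hx).1.le (hG01 x hx).2 hα).ne (hRAI x hx)
    refine ((hGα.const_sub 1).mul ((hasDerivAt_id' x).const_mul B).exp).congr_deriv ?_
    linear_combination -exp (B * x) * hkey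
  have hΦ_lim : Tendsto (fun y => (1 - G y ^ α) * exp (B * y)) (𝓝[>] 0) (𝓝 1) := by
    have hGα : Tendsto (fun y => G y ^ α) (𝓝[>] 0) (𝓝 0) := by
      simpa [Function.comp_def, zero_rpow hα.ne'] using
        (continuousAt_rpow_const 0 α (Or.inr hα.le)).tendsto.comp hG0
    have hexp : Tendsto (fun y => exp (B * y)) (𝓝[>] 0) (𝓝 1) := by
      simpa using ((by fun_prop : Continuous fun y => exp (B * y)).tendsto 0).mono_left
        nhdsWithin_le_nhds
    simpa using (hGα.const_sub 1).mul hexp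
  intro x hx
  have hΦ := eqOn_Ioi_of_hasDerivAt_zero hΦ_deriv hΦ_lim x hx
  have hGα : G x ^ α = 1 - exp (-(B * x)) := by
    linarith [exp_neg (B * x) ▸ eq_inv_of_mul_eq_one_left hΦ]
  rw [Fee, ← hGα, ← rpow_mul (hG01 x hx).1.le, mul_one_div_cancel hα.ne', rpow_one]

end Uniqueness

/-- For `α > 0` and `B > 0`, the exponentiated exponential cdf
`F(x) = [1 - exp(-Bx)]^(1/α)` is the cdf of a positive absolutely continuous random
variable (continuous, nondecreasing, with limits `0` at `0⁺` and `1` at `+∞`), it is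
differentiable on `(0,∞)` with derivative `f`, its α-generalized reversed aging
intensity is `L̆_α(x) = Bx` for all `x > 0`; moreover it is the unique such cdf with
α-generalized reversed aging intensity equal to `Bx`. -/
theorem stmt_15 (α B : ℝ) (hα : 0 < α) (hB : 0 < B) :
    ContinuousOn (Fee α B) (Set.Ioi 0) ∧
    MonotoneOn (Fee α B) (Set.Ioi 0) ∧
    Filter.Tendsto (Fee α B) (nhdsWithin (0:ℝ) (Set.Ioi 0)) (nhds 0) ∧
    Filter.Tendsto (Fee α B) Filter.atTop (nhds 1) ∧
    (∃ f : ℝ → ℝ, (∀ x > (0:ℝ), HasDerivAt (Fee α B) (f x) x) ∧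
      ∀ x > (0:ℝ), genRAI (Fee α B) f α x = B * x) ∧
    (∀ G g : ℝ → ℝ, Monotone G →
      (∀ x ∈ Set.Ioi (0:ℝ), HasDerivAt G (g x) x) →
      (∀ x ∈ Set.Ioi (0:ℝ), 0 < G x ∧ G x < 1) →
      (∀ u v : ℝ, 0 < u → 0 < v → IntervalIntegrable g MeasureTheory.volume u v) →
      Filter.Tendsto G (nhdsWithin (0:ℝ) (Set.Ioi 0)) (nhds 0) →
      (∀ x > (0:ℝ), genRAI G g α x = B * x) →
      ∀ x > (0:ℝ), G x = Fee α B x) := by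
  refine ⟨continuousOn_Fee hB, (strictMonoOn_Fee hα hB).monotoneOn, tendsto_Fee_nhdsGT_zero hα, tendsto_Fee_atTop hB,
    ⟨feeDensity α B, fun x hx => hasDerivAt_Fee hB hx, fun x hx => genRAI_Fee hα.ne' hB hx⟩,
    fun G g _ hGder hG01 _ hG0 hRAI => eq_Fee_of_genRAI_eq hα hGder hG01 hG0 hRAI⟩
end

section
/- Let X be a positive absolutely continuous random variable with cumulative distribution function F_X and density f_X, and let Y = 1/X, whose cumulative distribution function and density satisfy F_Y(x) = 1 − F_X(1/x) and f_Y(x) = f_X(1/x)/x² for x > 0. Then for every α ∈ ℝ and every x ∈ (0, +∞), the α-generalized aging intensity of X evaluated at 1/x equals the α-generalized reversed aging intensity of Y evaluated at x: L_{α,X}(1/x) = L̆_{α,Y}(x). -/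
/-- The α-generalized aging intensity function. -/
noncomputable def genAI (F f : ℝ → ℝ) (α x : ℝ) : ℝ :=
  if α = 0 then -(x * f x) / ((1 - F x) * Real.log (1 - F x))
  else α * x * (1 - F x) ^ (α - 1) * f x / (1 - (1 - F x) ^ α)

/-- Let `X` be a positive absolutely continuous random variable with cdf `F_X` and
density `f_X`, and let `Y = 1/X`, so that `F_Y(x) = 1 - F_X(1/x)` and
`f_Y(x) = f_X(1/x)/x²` for `x > 0`. Then for every `α ∈ ℝ` and `x > 0`,
`L_{α,X}(1/x) = L̆_{α,Y}(x)`. -/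
theorem stmt_16 (F f FY fY : ℝ → ℝ)
    (hFY : ∀ x > (0:ℝ), FY x = 1 - F (1/x))
    (hfY : ∀ x > (0:ℝ), fY x = f (1/x) / x ^ 2)
    (α x : ℝ) (hx : 0 < x) :
    genAI F f α (1/x) = genRAI FY fY α x := by
  have hx' : x ≠ 0 := ne_of_gt hx
  unfold genAI genRAI
  rw [hFY x hx, hfY x hx]
  have hk : x * (f (1/x) / x ^ 2) = 1/x * f (1/x) := by field_simp
  split
  · rw [hk]
  · rw [show α * x * (1 - F (1/x)) ^ (α - 1) * (f (1/x) / x ^ 2)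
        = α * (1/x) * (1 - F (1/x)) ^ (α - 1) * f (1/x) by field_simp]
end

section
/- Let X and Y be non-negative absolutely continuous random variables with cumulative distribution functions F_X, F_Y and densities f_X, f_Y, with 0 < F_X(x) < 1, 0 < F_Y(x) < 1 and f_X(x), f_Y(x) ≥ 0 for all x > 0. If there exists β ∈ ℝ such that X ≥_{αRAI} Y for all α < β (i.e., L̆_{α,X}(x) ≥ L̆_{α,Y}(x) for all x > 0 and all α < β), then X ≥_{rh} Y, i.e., the reversed hazard rates satisfy f_X(x)/F_X(x) ≥ f_Y(x)/F_Y(x) for all x > 0. -/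
open Filter Real Topology

theorem genRAI_neg {F f : ℝ → ℝ} {x t : ℝ} (hF : 0 < F x) (ht : t ≠ 0) :
    genRAI F f (-t) x = t * x * (f x / F x) / (1 - F x ^ t) := by
  have hpow : F x ^ (-t - 1) = (F x ^ t)⁻¹ * (F x)⁻¹ := by
    rw [sub_eq_add_neg, rpow_add hF, rpow_neg hF.le, rpow_neg_one]
  rw [genRAI, if_neg (neg_ne_zero.mpr ht), hpow, rpow_neg hF.le]
  by_cases h1 : F x ^ t = 1
  · simp [h1]
  · have h1' : 1 - F x ^ t ≠ 0 := sub_ne_zero.mpr (Ne.symm h1)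
    have h2 : 1 - (F x ^ t)⁻¹ ≠ 0 := by
      rwa [sub_ne_zero, ne_comm, inv_ne_one]
    field_simp
    ring

theorem tendsto_genRAI_neg_div {F f : ℝ → ℝ} {x : ℝ} (hF0 : 0 < F x) (hF1 : F x < 1)
    (hx : x ≠ 0) :
    Tendsto (fun t => genRAI F f (-t) x / (t * x)) atTop (𝓝 (f x / F x)) := by
  have hdenom : Tendsto (fun t : ℝ => 1 - F x ^ t) atTop (𝓝 1) := by
    simpa using tendsto_const_nhds.sub (tendsto_rpow_atTop_of_base_lt_one _ (by linarith) hF1)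
  have hlim : Tendsto (fun t : ℝ => f x / F x / (1 - F x ^ t)) atTop (𝓝 (f x / F x / 1)) :=
    tendsto_const_nhds.div hdenom one_ne_zero
  rw [div_one] at hlim
  refine hlim.congr' ?_
  filter_upwards [eventually_gt_atTop 0] with t ht
  rw [genRAI_neg hF0 ht.ne']
  field_simp

theorem stmt_19_general (FX fX FY fY : ℝ → ℝ)
    (hFX : ∀ x > (0:ℝ), 0 < FX x ∧ FX x < 1)
    (hFY : ∀ x > (0:ℝ), 0 < FY x ∧ FY x < 1)
    (β : ℝ)
    (h : ∀ α < β, ∀ x > (0:ℝ), genRAI FY fY α x ≤ genRAI FX fX α x) :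
    ∀ x > (0:ℝ), fY x / FY x ≤ fX x / FX x := by
  intro x hx
  obtain ⟨hX0, hX1⟩ := hFX x hx
  obtain ⟨hY0, hY1⟩ := hFY x hx
  refine le_of_tendsto_of_tendsto (tendsto_genRAI_neg_div hY0 hY1 hx.ne')
    (tendsto_genRAI_neg_div hX0 hX1 hx.ne') ?_
  filter_upwards [eventually_gt_atTop (max 0 (-β))] with t ht
  have ht0 : 0 < t := (le_max_left _ _).trans_lt ht
  have htβ : -t < β := by linarith [le_max_right 0 (-β)]
  exact div_le_div_of_nonneg_right (h (-t) htβ x hx) (by positivity)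

/-- If there exists `β ∈ ℝ` such that `X ≥_{αRAI} Y` for all `α < β`, then
`X ≥_{rh} Y`: the reversed hazard rates satisfy
`f_X(x)/F_X(x) ≥ f_Y(x)/F_Y(x)` for all `x > 0`. -/
theorem stmt_19 (FX fX FY fY : ℝ → ℝ)
    (hFX : ∀ x > (0:ℝ), 0 < FX x ∧ FX x < 1)
    (hFY : ∀ x > (0:ℝ), 0 < FY x ∧ FY x < 1)
    (hfX : ∀ x > (0:ℝ), 0 ≤ fX x)
    (hfY : ∀ x > (0:ℝ), 0 ≤ fY x)
    (β : ℝ)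
    (h : ∀ α < β, ∀ x > (0:ℝ), genRAI FY fY α x ≤ genRAI FX fX α x) :
    ∀ x > (0:ℝ), fY x / FY x ≤ fX x / FX x :=
  stmt_19_general FX fX FY fY hFX hFY β h
end
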